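/- arXiv:2403.14162 — 8 statements merged into one kernel-verified Lean document; each statement's English description precedes it below -/
import Mathlib

section
/- For every complex number z with |z| < 1, the derivative of the function 𝔅(z) = (1 + tanh z)^{1/2} has positive real part: Re 𝔅'(z) > 0. (Consequently, by the Noshiro–Warschawski criterion, 𝔅 is univalent on the unit disk.) -/
/-!
Put `v(z) = e^{4z/3} + e^{-2z/3} = 2 e^{z/3} cosh z`. Then `1 + tanh z = 2 e^{4z/3} / v(z)`, so on the
disk `𝔅 = √2 e^{2z/3} v^{-1/2}` and `𝔅' = √2 v^{-3/2}`; hence `Re 𝔅' > 0` as soon as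
`|arg v| < π/3`, i.e. `|Im v| < √3 Re v`. For `z = x + iy`, `v` is the sum of `e^{4z/3}`, of
argument `4y/3`, and `e^{-2z/3}`, of argument `-2y/3`. For `|y| ≤ π/4` both lie in the sector
`|arg| ≤ π/3`, the second strictly inside; beyond that `|x| < 0.62`, so `e^{4z/3}` is too short to
pull the sum out of the sector.
-/

open Complex Metric

/-- The bean function 𝔅(z) = (1 + tanh z)^(1/2), principal branch of the complex power. -/
noncomputable def Bean (z : ℂ) : ℂ := (1 + Complex.tanh z) ^ ((1:ℂ)/2)

/-- The open unit disk in ℂ. -/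
def unitDisk : Set ℂ := Metric.ball (0:ℂ) 1

/-- `Subord p g` : p is subordinate to g on the unit disk. -/
def Subord (p g : ℂ → ℂ) : Prop :=
  ∃ ω : ℂ → ℂ, AnalyticOnNhd ℂ ω unitDisk ∧ ω 0 = 0 ∧
    (∀ z ∈ unitDisk, ‖ω z‖ < 1) ∧ ∀ z ∈ unitDisk, p z = g (ω z)

namespace Real

lemma exp_two_mul_mul_sin_lt {x y : ℝ} (hxy : x ^ 2 + y ^ 2 < 1) (hy : 0 ≤ y) :
    exp (2 * x) * sin (4 * y / 3 - π / 3) < sin (2 * y / 3 + π / 3) := by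
  have hπ := pi_gt_d4
  have hπ' := pi_lt_d4
  have hy1 : y < 1 := by nlinarith
  rcases le_or_gt y (π / 4) with hy_small | hy_large
  · have hsin_nonpos : sin (4 * y / 3 - π / 3) ≤ 0 :=
      sin_nonpos_of_nonpos_of_neg_pi_le (by linarith) (by linarith)
    exact (mul_nonpos_of_nonneg_of_nonpos (exp_pos _).le hsin_nonpos).trans_lt
      (sin_pos_of_pos_of_lt_pi (by linarith) (by linarith))
  · have hrhs : 0.98 < sin (2 * y / 3 + π / 3) := by
      rw [← cos_pi_div_two_sub]
      nlinarith [one_sub_sq_div_two_le_cos (x := π / 2 - (2 * y / 3 + π / 3))]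
    have hsin_le : sin (4 * y / 3 - π / 3) ≤ 4 * y / 3 - π / 3 := sin_le (by linarith)
    have hexp : (1 - x / 2) ^ 4 * exp (2 * x) ≤ 1 := by
      have h := one_sub_div_pow_le_exp_neg (n := 4) (t := 2 * x) (by push_cast; nlinarith)
      rw [exp_neg] at h
      push_cast at h
      calc (1 - x / 2) ^ 4 * exp (2 * x) = (1 - 2 * x / 4) ^ 4 * exp (2 * x) := by ring
        _ ≤ (exp (2 * x))⁻¹ * exp (2 * x) := by gcongr
        _ = 1 := inv_mul_cancel₀ (exp_pos _).ne'
    have hE := exp_pos (2 * x)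
    -- `x ^ 2 < 1 - y ^ 2` bounds `(1 - x / 2) ^ 4 ≤ exp (-2x)` from below; splitting at `y = 0.9`
    -- trades this bound against the size of `4y/3 - π/3`.
    obtain ⟨p, S, hp, hS, hpS⟩ : ∃ p S : ℝ, p ≤ (1 - x / 2) ^ 4 ∧ 4 * y / 3 - π / 3 ≤ S ∧
        S < 0.98 * p := by
      rcases le_or_gt y 0.9 with hy9 | hy9
      · refine ⟨0.69 ^ 4, 0.16, pow_le_pow_left₀ (by norm_num) ?_ 4, by linarith, by norm_num⟩
        nlinarith
      · refine ⟨0.78 ^ 4, 0.29, pow_le_pow_left₀ (by norm_num) ?_ 4, by linarith, by norm_num⟩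
        nlinarith
    nlinarith [mul_le_mul_of_nonneg_left hsin_le hE.le, mul_le_mul_of_nonneg_right hp hE.le]

end Real

open ComplexConjugate Topology
open scoped Real

lemma Complex.abs_arg_lt_pi_div_three_of_abs_im_lt {w : ℂ} (h : |w.im| < √3 * w.re) :
    |arg w| < π / 3 := by
  have hre : 0 < w.re := pos_of_mul_pos_right ((abs_nonneg _).trans_lt h) (by positivity)
  have harg := abs_lt.1 (abs_arg_lt_pi_div_two_iff.2 (Or.inl hre))
  have htan := abs_lt.1 <| show |w.im / w.re| < √3 by rwa [abs_div, abs_of_pos hre, div_lt_iff₀ hre]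
  rw [← Real.arctan_tan (x := arg w) (by linarith) (by linarith), tan_arg,
    ← Real.arctan_sqrt_three, abs_lt, ← Real.arctan_neg]
  exact ⟨Real.arctan_strictMono htan.1, Real.arctan_strictMono htan.2⟩

noncomputable def beanDenom (z : ℂ) : ℂ := exp (4 * z / 3) + exp (-(2 * z) / 3)

lemma beanDenom_re (z : ℂ) :
    (beanDenom z).re = Real.exp (4 * z.re / 3) * Real.cos (4 * z.im / 3) +
      Real.exp (-(2 * z.re) / 3) * Real.cos (2 * z.im / 3) := by
  simp [beanDenom, exp_re, neg_div]

lemma beanDenom_im (z : ℂ) :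
    (beanDenom z).im = Real.exp (4 * z.re / 3) * Real.sin (4 * z.im / 3) -
      Real.exp (-(2 * z.re) / 3) * Real.sin (2 * z.im / 3) := by
  simp [beanDenom, exp_im, neg_div, sub_eq_add_neg]

lemma beanDenom_conj (z : ℂ) : beanDenom (conj z) = conj (beanDenom z) := by
  simp [beanDenom, ← exp_conj, map_ofNat]

lemma beanDenom_eq_mul_cosh (z : ℂ) : beanDenom z = 2 * exp (z / 3) * cosh z := by
  rw [beanDenom, cosh, show 2 * exp (z / 3) * ((exp z + exp (-z)) / 2) =
    exp (z / 3 + z) + exp (z / 3 + -z) by rw [exp_add, exp_add]; ring]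
  ring_nf

lemma hasDerivAt_beanDenom (z : ℂ) :
    HasDerivAt beanDenom (4 / 3 * exp (4 * z / 3) - 2 / 3 * exp (-(2 * z) / 3)) z := by
  have h1 : HasDerivAt (fun ζ : ℂ ↦ 4 * ζ / 3) (4 / 3) z := by
    simpa using ((hasDerivAt_id' z).const_mul (4 : ℂ)).div_const 3
  have h2 : HasDerivAt (fun ζ : ℂ ↦ -(2 * ζ) / 3) (-(2 / 3)) z := by
    simpa [neg_div] using ((hasDerivAt_id' z).const_mul (2 : ℂ)).neg.div_const 3
  exact (h1.cexp.add h2.cexp).congr_deriv (by ring)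

lemma abs_im_beanDenom_lt {z : ℂ} (hz : ‖z‖ < 1) :
    |(beanDenom z).im| < √3 * (beanDenom z).re := by
  wlog hy : 0 ≤ z.im generalizing z
  · simpa [beanDenom_conj] using this (z := conj z) (by simpa using hz)
      (by simpa using (not_le.1 hy).le)
  have hxy : z.re ^ 2 + z.im ^ 2 < 1 := by
    rw [← sq_lt_one_iff₀ (norm_nonneg z), ← normSq_eq_norm_sq, normSq_apply] at hz
    nlinarith
  have hπ := Real.pi_gt_d2
  have hy1 : z.im < 1 := by nlinarith
  -- `hupper` and `hlower` say `Im (e^{-iπ/3} v) < 0 < Im (e^{iπ/3} v)` for `v = beanDenom z`.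
  have hupper : Real.exp (4 * z.re / 3) * Real.sin (4 * z.im / 3 - π / 3) <
      Real.exp (-(2 * z.re) / 3) * Real.sin (2 * z.im / 3 + π / 3) := by
    have h := mul_lt_mul_of_pos_left (Real.exp_two_mul_mul_sin_lt hxy hy)
      (Real.exp_pos (-(2 * z.re) / 3))
    rwa [← mul_assoc, ← Real.exp_add, show -(2 * z.re) / 3 + 2 * z.re = 4 * z.re / 3 by ring] at h
  have hlower : Real.exp (-(2 * z.re) / 3) * Real.sin (2 * z.im / 3 - π / 3) <
      Real.exp (4 * z.re / 3) * Real.sin (4 * z.im / 3 + π / 3) := by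
    have h1 : Real.sin (2 * z.im / 3 - π / 3) < 0 :=
      Real.sin_neg_of_neg_of_neg_pi_lt (by linarith) (by linarith)
    have h2 : 0 ≤ Real.sin (4 * z.im / 3 + π / 3) :=
      Real.sin_nonneg_of_nonneg_of_le_pi (by linarith) (by linarith)
    nlinarith [Real.exp_pos (-(2 * z.re) / 3), Real.exp_pos (4 * z.re / 3)]
  rw [Real.sin_sub, Real.sin_add] at hupper hlower
  rw [Real.sin_pi_div_three, Real.cos_pi_div_three] at hupper hlower
  rw [beanDenom_re, beanDenom_im, abs_lt]
  constructor <;> nlinarith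

lemma abs_arg_beanDenom_lt {z : ℂ} (hz : ‖z‖ < 1) : |arg (beanDenom z)| < π / 3 :=
  abs_arg_lt_pi_div_three_of_abs_im_lt (abs_im_beanDenom_lt hz)

lemma beanDenom_mem_slitPlane {z : ℂ} (hz : ‖z‖ < 1) : beanDenom z ∈ slitPlane :=
  mem_slitPlane_iff.2 <| Or.inl <|
    pos_of_mul_pos_right ((abs_nonneg _).trans_lt (abs_im_beanDenom_lt hz)) (by positivity)

/-- A logarithm of `1 + tanh z` wherever `beanDenom z ≠ 0`; on the unit disk it is the principal one. -/
noncomputable def logOneAddTanh (z : ℂ) : ℂ := log 2 + 4 * z / 3 - log (beanDenom z)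

lemma one_add_tanh_eq_exp_logOneAddTanh {z : ℂ} (hz : beanDenom z ≠ 0) :
    1 + tanh z = exp (logOneAddTanh z) := by
  have hcosh : cosh z ≠ 0 := by
    rintro h
    simp [beanDenom_eq_mul_cosh, h] at hz
  rw [logOneAddTanh, exp_sub, exp_add, exp_log hz, exp_log two_ne_zero, tanh_eq_sinh_div_cosh,
    beanDenom_eq_mul_cosh, one_add_div hcosh, cosh_add_sinh,
    show 4 * z / 3 = z / 3 + z by ring, exp_add]
  field_simp

lemma logOneAddTanh_im (z : ℂ) : (logOneAddTanh z).im = 4 * z.im / 3 - arg (beanDenom z) := by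
  simp [logOneAddTanh, log_im]

lemma bean_eqOn_ball : Set.EqOn Bean (fun z ↦ exp (logOneAddTanh z / 2)) (ball 0 1) := by
  intro z hz
  rw [mem_ball_zero_iff] at hz
  have harg := abs_lt.1 (abs_arg_beanDenom_lt hz)
  have him := abs_le.1 (abs_im_le_norm z)
  have hπ := Real.pi_gt_three
  rw [Bean, one_add_tanh_eq_exp_logOneAddTanh (slitPlane_ne_zero (beanDenom_mem_slitPlane hz)),
    cpow_def_of_ne_zero (exp_ne_zero _), log_exp, mul_one_div] <;>
  · rw [logOneAddTanh_im]
    linarith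

lemma hasDerivAt_exp_half_logOneAddTanh {z : ℂ} (hz : beanDenom z ∈ slitPlane) :
    HasDerivAt (fun z ↦ exp (logOneAddTanh z / 2)) (√2 * beanDenom z ^ (-(3 / 2) : ℂ)) z := by
  have hv := slitPlane_ne_zero hz
  have hlog : HasDerivAt logOneAddTanh
      (4 / 3 - (4 / 3 * exp (4 * z / 3) - 2 / 3 * exp (-(2 * z) / 3)) / beanDenom z) z :=
    (((((hasDerivAt_id' z).const_mul (4 : ℂ)).div_const 3).const_add (log 2)).sub
      ((hasDerivAt_beanDenom z).clog hz)).congr_deriv (by ring)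
  have hfactor : (4 / 3 - (4 / 3 * exp (4 * z / 3) - 2 / 3 * exp (-(2 * z) / 3)) / beanDenom z) / 2
      = exp (-(2 * z) / 3) * exp (-log (beanDenom z)) := by
    rw [exp_neg, exp_log hv]
    unfold beanDenom at hv ⊢
    generalize exp (4 * z / 3) = a at hv ⊢
    generalize exp (-(2 * z) / 3) = b at hv ⊢
    field_simp
    ring
  have hsqrt2 : exp (log 2 / 2) = √2 := by
    rw [← ofReal_ofNat, ← ofReal_log zero_le_two, ← ofReal_div, ← ofReal_exp,
      Real.sqrt_eq_rpow, Real.rpow_def_of_pos two_pos]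
    ring_nf
  refine (hlog.div_const 2).cexp.congr_deriv ?_
  rw [hfactor, cpow_def_of_ne_zero hv, ← hsqrt2, ← exp_add, ← exp_add, ← exp_add, logOneAddTanh]
  congr 1
  ring

lemma deriv_bean {z : ℂ} (hz : ‖z‖ < 1) : deriv Bean z = √2 * beanDenom z ^ (-(3 / 2) : ℂ) := by
  have heq : Bean =ᶠ[𝓝 z] fun z ↦ exp (logOneAddTanh z / 2) :=
    Filter.eventuallyEq_of_mem (isOpen_ball.mem_nhds (mem_ball_zero_iff.2 hz)) bean_eqOn_ball
  rw [heq.deriv_eq, (hasDerivAt_exp_half_logOneAddTanh (beanDenom_mem_slitPlane hz)).deriv]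

/-- Re 𝔅'(z) > 0 on the unit disk. -/
theorem beanDerivRealPartPos :
    ∀ z : ℂ, ‖z‖ < 1 → 0 < (deriv Bean z).re := by
  intro z hz
  have harg := abs_lt.1 (abs_arg_beanDenom_lt hz)
  have hv := slitPlane_ne_zero (beanDenom_mem_slitPlane hz)
  rw [deriv_bean hz, re_ofReal_mul, cpow_def_of_ne_zero hv, exp_re, mul_im, log_im]
  refine mul_pos (by positivity) (mul_pos (Real.exp_pos _) (Real.cos_pos_of_mem_Ioo ?_))
  norm_num
  constructor <;> linarith
end

section
/- For every complex number z with |z| ≤ 1, the real part of 𝔅(z) = (1 + tanh z)^{1/2} satisfies Re 𝔅(z) ≥ √(2/(1+e²)). (The bound is attained at z = −1, since 𝔅(−1) = √(1 − tanh 1) = √(2/(1+e²)).) -/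
open Complex Metric

/-!
With `u = -2z` one has `1 + tanh z = 2 / (1 + eᵘ)` and `Re √w = √((|w| + Re w) / 2)`, so the claim
becomes `2 |1 + eᵘ|² ≤ (1 + e²) (|1 + eᵘ| + Re (1 + eᵘ))` for `|u| ≤ 2`. Write `u = x + iy`,
`a = eˣ`, `c = cos y`. Then `|1 + eᵘ| ≥ a + c`, and the resulting bound is affine in `c` with
nonnegative slope; since `c ≥ 1 - y²/2 ≥ (x² - 2)/2`, it reduces to the one-variable inequality
`4 (eˣ - 1)² + 4 eˣ x² ≤ (1 + e²) (1 + eˣ) x²` on `[-2, 2]`, an equality at `x = 2` (that is,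
`z = -1`). This follows by bounding the tail of the cosh series at `x` by `(x/2)⁴` times its tail
at `2`, and `e⁻ˣ` from below by its tangent line at `2`.
-/

namespace Real

open scoped Nat

theorem cosh_le_of_abs_le {x R : ℝ} (hR : 0 < R) (hx : |x| ≤ R) :
    cosh x ≤ 1 + x ^ 2 / 2 + (cosh R - 1 - R ^ 2 / 2) * (x / R) ^ 4 := by
  set q := (x / R) ^ 2 with hq
  have hq1 : q ≤ 1 := by
    rw [hq, div_pow, div_le_one (by positivity)]
    exact sq_le_sq' (abs_le.1 hx).1 (abs_le.1 hx).2
  have tail (r : ℝ) :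
      HasSum (fun n ↦ r ^ (2 * (n + 2)) / ↑(2 * (n + 2))!) (cosh r - 1 - r ^ 2 / 2) := by
    rw [sub_sub]
    simpa [Finset.sum_range_succ] using (hasSum_nat_add_iff' 2).2 (hasSum_cosh r)
  have termwise (n : ℕ) :
      x ^ (2 * (n + 2)) / ↑(2 * (n + 2))! ≤ q ^ 2 * (R ^ (2 * (n + 2)) / ↑(2 * (n + 2))!) := by
    have hxq : x ^ (2 * (n + 2)) = q ^ (n + 2) * R ^ (2 * (n + 2)) := by
      rw [hq, ← pow_mul, ← mul_pow, div_mul_cancel₀ _ hR.ne', mul_comm]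
    rw [hxq, mul_div_assoc]
    exact mul_le_mul_of_nonneg_right (pow_le_pow_of_le_one (sq_nonneg _) hq1 (by omega))
      (by positivity)
  have := hasSum_le termwise (tail x) ((tail R).mul_left (q ^ 2))
  rw [hq, ← pow_mul] at this
  linarith

theorem four_mul_sq_exp_sub_one_add_le {x : ℝ} (hx : |x| ≤ 2) :
    4 * (rexp x - 1) ^ 2 + 4 * rexp x * x ^ 2 ≤ (1 + rexp 2) * (1 + rexp x) * x ^ 2 := by
  obtain ⟨hxl, hxr⟩ := abs_le.1 hx
  set E := rexp 2 with hE_def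
  set a := rexp x
  have hE : 6 ≤ E := by
    have : rexp 1 ^ 2 = E := by rw [← exp_nat_mul, hE_def]; norm_num
    nlinarith [exp_one_gt_d9]
  have ha : 0 < a := exp_pos x
  have hcosh2 : 2 * E * cosh 2 = E ^ 2 + 1 := by
    rw [cosh_eq, exp_neg]; field_simp; ring
  have hcoshx : 2 * a * cosh x = a ^ 2 + 1 := by
    rw [cosh_eq, exp_neg]; field_simp; ring
  have hseries : 8 * (cosh x - 1) ≤ 4 * x ^ 2 + (cosh 2 - 3) * x ^ 4 / 2 := by
    have := cosh_le_of_abs_le two_pos hx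
    rw [div_pow] at this
    linarith
  have htangent : a * (3 - x) ≤ E := by
    have h := add_one_le_exp (2 - x)
    rw [exp_sub, le_div_iff₀ ha] at h
    linarith
  -- `E * (rhs - lhs)` factors as `(2 - x) * ((E ^ 2 - 6 * E + 1) * (x + 2) / 4 + (E + 1))`
  have hpoly : E * (4 + (cosh 2 - 3) * x ^ 2 / 2) ≤ E * (E - 3) + (E + 1) * (3 - x) := by
    have h1 : 0 ≤ (2 - x) * ((E ^ 2 - 6 * E + 1) * (x + 2) / 4 + (E + 1)) := by
      apply mul_nonneg (by linarith)
      have : 0 ≤ E ^ 2 - 6 * E + 1 := by nlinarith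
      exact add_nonneg (div_nonneg (mul_nonneg this (by linarith)) zero_le_four) (by linarith)
    nlinarith
  have hE0 : 0 < E := by linarith
  refine le_of_mul_le_mul_left ?_ hE0
  calc E * (4 * (a - 1) ^ 2 + 4 * a * x ^ 2)
      = E * a * (8 * (cosh x - 1)) + 4 * E * a * x ^ 2 := by linear_combination (-4 * E) * hcoshx
    _ ≤ E * a * (4 * x ^ 2 + (cosh 2 - 3) * x ^ 4 / 2) + 4 * E * a * x ^ 2 := by gcongr
    _ = a * x ^ 2 * (E * (4 + (cosh 2 - 3) * x ^ 2 / 2)) + 4 * E * a * x ^ 2 := by ring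
    _ ≤ a * x ^ 2 * (E * (E - 3) + (E + 1) * (3 - x)) + 4 * E * a * x ^ 2 := by gcongr
    _ = E * (E - 3) * a * x ^ 2 + (E + 1) * x ^ 2 * (a * (3 - x)) + 4 * E * a * x ^ 2 := by ring
    _ ≤ E * (E - 3) * a * x ^ 2 + (E + 1) * x ^ 2 * E + 4 * E * a * x ^ 2 := by gcongr
    _ = E * ((1 + E) * (1 + a) * x ^ 2) := by ring

end Real

namespace Complex

theorem re_cpow_one_div_two (w : ℂ) : (w ^ (1 / 2 : ℂ)).re = √((‖w‖ + w.re) / 2) := by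
  rcases eq_or_ne w 0 with rfl | hw
  · simp
  have hnorm : 0 < ‖w‖ := norm_pos_iff.2 hw
  have hexp : Real.exp (Real.log ‖w‖ / 2) = √‖w‖ := by
    rw [Real.sqrt_eq_rpow, Real.rpow_def_of_pos hnorm, mul_one_div]
  rw [cpow_def_of_ne_zero hw, exp_re, mul_one_div, div_ofNat_re, div_ofNat_im, log_re, log_im,
    hexp, Real.cos_half (neg_pi_lt_arg w).le (arg_le_pi w), cos_arg hw,
    ← Real.sqrt_mul hnorm.le]
  congr 1
  field_simp

theorem half_norm_add_re_two_div (v : ℂ) :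
    (‖2 / v‖ + (2 / v).re) / 2 = (‖v‖ + v.re) / ‖v‖ ^ 2 := by
  rcases eq_or_ne v 0 with rfl | hv
  · simp
  have hnorm : ‖v‖ ≠ 0 := norm_ne_zero_iff.2 hv
  rw [norm_div, Complex.norm_two, div_re, ← Complex.sq_norm]
  simp only [re_ofNat, im_ofNat]
  field_simp
  ring

theorem cosh_ne_zero_of_norm_lt {z : ℂ} (hz : ‖z‖ < Real.pi / 2) : cosh z ≠ 0 := by
  rw [← cos_mul_I]
  intro h
  obtain ⟨k, hk⟩ := cos_eq_zero_iff.1 h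
  have hnorm : ‖z‖ = |2 * k + 1| * Real.pi / 2 := by
    have hcast : 2 * (k : ℂ) + 1 = ((2 * k + 1 : ℤ) : ℂ) := by push_cast; ring
    rw [← mul_one ‖z‖, ← norm_I, ← norm_mul, hk, hcast, norm_div, norm_mul, norm_intCast,
      norm_real, Real.norm_of_nonneg Real.pi_pos.le, Complex.norm_two, Int.cast_abs]
  have hk1 : (1 : ℝ) ≤ |2 * k + 1| := by
    exact_mod_cast Int.one_le_abs (by omega : 2 * k + 1 ≠ 0)
  nlinarith [Real.pi_pos]

theorem two_mul_cosh_eq (z : ℂ) : 2 * cosh z = exp z * (1 + exp (-2 * z)) := by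
  rw [two_cosh, mul_add, mul_one, ← exp_add]
  ring_nf

theorem one_add_exp_neg_two_mul_ne_zero {z : ℂ} (hz : cosh z ≠ 0) : 1 + exp (-2 * z) ≠ 0 := by
  intro h
  apply hz
  have := two_mul_cosh_eq z
  rw [h, mul_zero] at this
  simpa using this

theorem one_add_tanh_eq {z : ℂ} (hz : cosh z ≠ 0) : 1 + tanh z = 2 / (1 + exp (-2 * z)) := by
  rw [tanh_eq_sinh_div_cosh, one_add_div hz, cosh_add_sinh,
    eq_div_iff (one_add_exp_neg_two_mul_ne_zero hz), div_mul_eq_mul_div,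
    div_eq_iff hz, ← two_mul_cosh_eq, mul_comm]

theorem two_mul_sq_norm_one_add_exp_le {u : ℂ} (hu : ‖u‖ ≤ 2) :
    2 * ‖1 + exp u‖ ^ 2 ≤ (1 + Real.exp 2) * (‖1 + exp u‖ + (1 + exp u).re) := by
  set E := Real.exp 2
  set r := ‖1 + exp u‖
  set x := u.re
  set y := u.im
  set a := Real.exp x
  set c := Real.cos y
  have hE : 3 ≤ E := by linarith [Real.add_one_le_exp 2]
  have ha : 0 < a := Real.exp_pos x
  have hre : (1 + exp u).re = 1 + a * c := by simp [exp_re, a, c, x, y]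
  have hr2 : r ^ 2 = 1 + 2 * a * c + a ^ 2 := by
    rw [Complex.sq_norm, normSq_apply]
    simp only [add_re, add_im, one_re, one_im, exp_re, exp_im]
    nlinarith [Real.sin_sq_add_cos_sq y]
  have hx : |x| ≤ 2 := (abs_re_le_norm u).trans hu
  have hc : (x ^ 2 - 2) / 2 ≤ c := by
    have hxy : x ^ 2 + y ^ 2 ≤ 4 := by
      rw [sq x, sq y, ← normSq_apply, ← Complex.sq_norm]
      nlinarith [norm_nonneg u]
    linarith [Real.one_sub_sq_div_two_le_cos (x := y)]
  have hr : a + c ≤ r := by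
    nlinarith [Real.cos_le_one y, Real.neg_one_le_cos y, norm_nonneg (1 + exp u)]
  have hP := Real.four_mul_sq_exp_sub_one_add_le hx
  have hslope : 0 ≤ (1 + E) * (1 + a) - 4 * a := by nlinarith
  have hquad : 2 * (1 + 2 * a * c + a ^ 2) ≤ (1 + E) * (1 + a) * (1 + c) := by
    nlinarith [mul_nonneg hslope (sub_nonneg.2 hc)]
  calc 2 * r ^ 2 = 2 * (1 + 2 * a * c + a ^ 2) := by rw [hr2]
    _ ≤ (1 + E) * (1 + a) * (1 + c) := hquad
    _ ≤ (1 + E) * (r + (1 + a * c)) := by nlinarith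
    _ = (1 + E) * (r + (1 + exp u).re) := by rw [hre]

end Complex

/-- Re 𝔅(z) ≥ √(2/(1+e²)) for |z| ≤ 1. -/
theorem beanRealPartLowerBound :
    ∀ z : ℂ, ‖z‖ ≤ 1 → Real.sqrt (2 / (1 + Real.exp 1 ^ 2)) ≤ (Bean z).re := by
  intro z hz
  have hcosh : cosh z ≠ 0 := cosh_ne_zero_of_norm_lt (by linarith [Real.pi_gt_three])
  have hu : ‖-2 * z‖ ≤ 2 := by rw [norm_mul]; norm_num; linarith
  have hv : 0 < ‖1 + exp (-2 * z)‖ := norm_pos_iff.2 (one_add_exp_neg_two_mul_ne_zero hcosh)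
  have hE : Real.exp 1 ^ 2 = Real.exp 2 := by rw [← Real.exp_nat_mul]; norm_num
  rw [Bean, one_add_tanh_eq hcosh, re_cpow_one_div_two, half_norm_add_re_two_div, hE]
  apply Real.sqrt_le_sqrt
  rw [div_le_div_iff₀ (by positivity) (by positivity)]
  linarith [two_mul_sq_norm_one_add_exp_le hu]
end

section
/- For every complex number z with |z| ≤ 1, the modulus of 𝔅(z) = (1 + tanh z)^{1/2} satisfies |𝔅(z)| ≥ √(2/(1+e²)). (The bound is attained at z = −1.) -/
open Complex Metric

/-!
Writing `1 + tanh z = 2 / (1 + e^{-2z})`, the triangle inequality gives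
`|1 + tanh z| ≥ 2 / (1 + e^{-2 Re z}) ≥ 2 / (1 + e²)` as soon as `Re z ≥ -1`;
and the principal square root has modulus `√|w|`.
-/

namespace Complex

theorem one_add_exp_neg_two_mul (z : ℂ) : 1 + exp (-2 * z) = 2 * exp (-z) * cosh z := by
  rw [cosh]
  field_simp
  rw [mul_add, ← exp_add, ← exp_add]
  ring_nf
  rw [exp_zero, add_comm]

theorem one_add_tanh_eq_two_div {z : ℂ} (h : cosh z ≠ 0) :
    1 + tanh z = 2 / (1 + exp (-2 * z)) := by
  rw [one_add_exp_neg_two_mul, tanh_eq_sinh_div_cosh, exp_neg, ← cosh_add_sinh z]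
  field_simp

theorem two_div_le_norm_one_add_tanh {z : ℂ} (h : cosh z ≠ 0) :
    2 / (1 + Real.exp (-2 * z.re)) ≤ ‖1 + tanh z‖ := by
  have hpos : 0 < ‖1 + exp (-2 * z)‖ := by
    rw [one_add_exp_neg_two_mul]
    exact norm_pos_iff.mpr (mul_ne_zero (mul_ne_zero two_ne_zero (exp_ne_zero _)) h)
  have hden : ‖1 + exp (-2 * z)‖ ≤ 1 + Real.exp (-2 * z.re) :=
    (norm_add_le _ _).trans_eq (by simp [norm_exp])
  rw [one_add_tanh_eq_two_div h, norm_div, Complex.norm_two]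
  gcongr

theorem two_div_one_add_exp_one_sq_le_norm_one_add_tanh {z : ℂ} (hz : -1 ≤ z.re) :
    2 / (1 + Real.exp 1 ^ 2) ≤ ‖1 + tanh z‖ := by
  by_cases h : cosh z = 0
  · -- at a pole of `tanh`, the convention `x / 0 = 0` makes `1 + tanh z = 1`
    rw [tanh_eq_sinh_div_cosh, h, div_zero, add_zero, norm_one, div_le_one (by positivity)]
    linarith [one_le_pow₀ (n := 2) (Real.one_le_exp zero_le_one)]
  · calc 2 / (1 + Real.exp 1 ^ 2) ≤ 2 / (1 + Real.exp (-2 * z.re)) := by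
          rw [← Real.exp_nat_mul]
          gcongr 2 / (1 + ?_)
          exact Real.exp_le_exp.mpr (by push_cast; linarith)
      _ ≤ ‖1 + tanh z‖ := two_div_le_norm_one_add_tanh h

theorem norm_cpow_one_half (w : ℂ) : ‖w ^ (1 / 2 : ℂ)‖ = √‖w‖ := by
  rw [show (1 / 2 : ℂ) = ((1 / 2 : ℝ) : ℂ) by norm_num, norm_cpow_real, Real.sqrt_eq_rpow]

end Complex

/-- |𝔅(z)| ≥ √(2/(1+e²)) for |z| ≤ 1. -/
theorem beanModulusLowerBound :
    ∀ z : ℂ, ‖z‖ ≤ 1 → Real.sqrt (2 / (1 + Real.exp 1 ^ 2)) ≤ ‖Bean z‖ := by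
  intro z hz
  have hre : -1 ≤ z.re := (abs_le.mp ((abs_re_le_norm z).trans hz)).1
  rw [Bean, norm_cpow_one_half]
  exact Real.sqrt_le_sqrt (two_div_one_add_exp_one_sq_le_norm_one_add_tanh hre)
end

section
/- If p is analytic on 𝔻 and p ≺ 𝔅, then p ≺ exp, i.e. p is subordinate to the exponential function z ↦ e^z on 𝔻. (In class language: 𝒮*_𝔅 ⊂ 𝒮*_e.) -/
open Complex Metric

/-!
Since `1 + tanh z = e^z / cosh z`, the bean function is `𝔅 = exp ∘ φ` with
`φ z = (z - log (cosh z)) / 2`. Comparing the power series of `cosh z - 1` with that of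
`cosh ‖z‖ - 1` gives `‖cosh z - 1‖ ≤ cosh 1 - 1 < 0.55` on the unit disk, hence
`‖log (cosh z)‖ < 1` and `‖φ z‖ < 1` there. So `𝔅 ≺ exp` with Schwarz function `φ`, and the
theorem follows from transitivity of subordination.
-/

theorem Subord.trans {p g h : ℂ → ℂ} (hpg : Subord p g) (hgh : Subord g h) : Subord p h := by
  obtain ⟨ω₁, hω₁, hω₁0, hω₁_lt, hpω₁⟩ := hpg
  obtain ⟨ω₂, hω₂, hω₂0, hω₂_lt, hgω₂⟩ := hgh
  have hmaps : ∀ z ∈ unitDisk, ω₁ z ∈ unitDisk := fun z hz => mem_ball_zero_iff.mpr (hω₁_lt z hz)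
  refine ⟨ω₂ ∘ ω₁, fun z hz => (hω₂ _ (hmaps z hz)).comp (hω₁ z hz), by simp [hω₁0, hω₂0],
    fun z hz => hω₂_lt _ (hmaps z hz), fun z hz => ?_⟩
  rw [hpω₁ z hz, hgω₂ _ (hmaps z hz), Function.comp_apply]

namespace Complex

theorem norm_cosh_sub_one_le (z : ℂ) : ‖cosh z - 1‖ ≤ Real.cosh ‖z‖ - 1 := by
  have hz := (hasSum_nat_add_iff' 1).mpr (hasSum_cosh z)
  have hr := (hasSum_nat_add_iff' 1).mpr (Real.hasSum_cosh ‖z‖)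
  simp only [Finset.sum_range_one, mul_zero, pow_zero, Nat.factorial_zero, Nat.cast_one,
    div_one] at hz hr
  exact hz.norm_le_of_bounded hr fun n => by simp

theorem norm_cosh_sub_one_lt {z : ℂ} (hz : ‖z‖ ≤ 1) : ‖cosh z - 1‖ < 11 / 20 := by
  have hmono : Real.cosh ‖z‖ ≤ Real.cosh 1 :=
    Real.cosh_le_cosh.mpr (by rwa [abs_norm, abs_one])
  linarith [norm_cosh_sub_one_le z, Real.cosh_eq 1, Real.exp_one_lt_d9, Real.exp_neg_one_lt_d9]

theorem cosh_mem_slitPlane {z : ℂ} (hz : ‖z‖ ≤ 1) : cosh z ∈ slitPlane := by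
  simpa using mem_slitPlane_of_norm_lt_one ((norm_cosh_sub_one_lt hz).trans (by norm_num))

theorem norm_log_cosh_lt_one {z : ℂ} (hz : ‖z‖ ≤ 1) : ‖log (cosh z)‖ < 1 := by
  set c := cosh z - 1
  have hc : ‖c‖ < 11 / 20 := norm_cosh_sub_one_lt hz
  have hinv : (1 - ‖c‖)⁻¹ ≤ 20 / 9 := by
    rw [inv_le_comm₀ (by linarith) (by norm_num)]
    linarith
  calc ‖log (cosh z)‖ = ‖log (1 + c)‖ := by rw [add_sub_cancel]
    _ ≤ ‖c‖ ^ 2 * (1 - ‖c‖)⁻¹ / 2 + ‖c‖ := norm_log_one_add_le (hc.trans (by norm_num))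
    _ < 1 := by nlinarith [norm_nonneg c]

theorem one_add_tanh_eq_exp_div_cosh {z : ℂ} (hz : cosh z ≠ 0) :
    1 + tanh z = exp z / cosh z := by
  rw [tanh_eq_sinh_div_cosh, ← cosh_add_sinh]
  field_simp

theorem exp_cpow_eq_exp_mul {ζ : ℂ} (h₁ : -Real.pi < ζ.im) (h₂ : ζ.im ≤ Real.pi) (s : ℂ) :
    exp ζ ^ s = exp (ζ * s) := by
  rw [cpow_def_of_ne_zero (exp_ne_zero ζ), log_exp h₁ h₂]

end Complex

noncomputable def logBean (z : ℂ) : ℂ := (z - log (cosh z)) / 2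

theorem exp_logBean {z : ℂ} (hz : ‖z‖ ≤ 1) : exp (logBean z) = Bean z := by
  have hcosh := slitPlane_ne_zero (cosh_mem_slitPlane hz)
  have hnorm : ‖z - log (cosh z)‖ < 2 := by
    linarith [norm_sub_le z (log (cosh z)), norm_log_cosh_lt_one hz]
  have him := abs_lt.mp ((abs_im_le_norm _).trans_lt hnorm)
  rw [Bean, one_add_tanh_eq_exp_div_cosh hcosh, ← exp_log hcosh, ← exp_sub,
    exp_cpow_eq_exp_mul (by linarith [Real.pi_gt_three]) (by linarith [Real.pi_gt_three]),
    logBean, div_eq_mul_one_div]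

theorem norm_logBean_lt_one {z : ℂ} (hz : ‖z‖ ≤ 1) : ‖logBean z‖ < 1 := by
  rw [logBean, norm_div, RCLike.norm_ofNat, div_lt_one two_pos]
  linarith [norm_sub_le z (log (cosh z)), norm_log_cosh_lt_one hz]

theorem analyticOnNhd_logBean : AnalyticOnNhd ℂ logBean (closedBall 0 1) := fun z hz =>
  have hz : ‖z‖ ≤ 1 := mem_closedBall_zero_iff.mp hz
  ((analyticAt_id.sub (analyticAt_cosh.clog (cosh_mem_slitPlane hz))).div
    analyticAt_const two_ne_zero)

theorem bean_subord_exp : Subord Bean exp := by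
  refine ⟨logBean, analyticOnNhd_logBean.mono ball_subset_closedBall, by simp [logBean],
    fun z hz => norm_logBean_lt_one (mem_ball_zero_iff.mp hz).le,
    fun z hz => (exp_logBean (mem_ball_zero_iff.mp hz).le).symm⟩

theorem beanSubsetExp_general (p : ℂ → ℂ) (hsub : Subord p Bean) : Subord p Complex.exp :=
  hsub.trans bean_subord_exp

/-- p ≺ 𝔅 implies p ≺ exp (i.e. 𝒮*_𝔅 ⊂ 𝒮*_e). -/
theorem beanSubsetExp (p : ℂ → ℂ) (hp : AnalyticOnNhd ℂ p unitDisk)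
    (hsub : Subord p Bean) : Subord p Complex.exp :=
  beanSubsetExp_general p hsub
end

section
/- Let k be a real number with k ≥ 2e/(2e − √(2(1+e²))). If p is analytic on 𝔻 with p(0) = 1 and Re p(z) > k·|p(z) − 1| for every z ∈ 𝔻, then p ≺ 𝔅. (In class language: k-𝒮𝒯 ⊂ 𝒮*_𝔅 for k ≥ 2e/(2e − √(2(1+e²))).) -/
open Complex Metric

/-!
If `Re p > k‖p - 1‖` then, since `Re p ≤ ‖p - 1‖ + 1`, we get `(k - 1)‖p - 1‖ < 1`;
for `k ≥ a / (a - 1)` with `a = 2e / √(2(1 + e²))` this gives `‖p - 1‖ + 1 < a`,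
hence `‖p² - 1‖ ≤ (‖p - 1‖ + 1)² - 1 < a² - 1 = tanh 1`. The Schwarz function is then
`ω = artanh (p² - 1)`: the Taylor coefficients of `artanh` are nonnegative, so
`‖ω‖ ≤ artanh ‖p² - 1‖ < artanh (tanh 1) = 1`, and `𝔅 ω = √(p²) = p` because
`Re p > 0`.
-/

namespace Complex

noncomputable def artanh (z : ℂ) : ℂ := (log (1 + z) - log (1 - z)) / 2

@[simp]
theorem artanh_zero : artanh 0 = 0 := by simp [artanh]

theorem tanh_artanh {z : ℂ} (h₁ : 1 + z ≠ 0) (h₂ : 1 - z ≠ 0) : tanh (artanh z) = z := by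
  have hexp : exp (artanh z) ^ 2 = (1 + z) / (1 - z) := by
    rw [← exp_nat_mul, show ((2 : ℕ) : ℂ) * artanh z = log (1 + z) - log (1 - z) by
      push_cast [artanh]; ring, exp_sub, exp_log h₁, exp_log h₂]
  have hu : exp (artanh z) ≠ 0 := exp_ne_zero _
  rw [tanh_eq_sinh_div_cosh, sinh, cosh, exp_neg]
  field_simp
  rw [hexp, div_add_one h₂, div_sub_one h₂, div_div_div_cancel_right₀ h₂]
  ring

theorem hasSum_log_one_add_sub_log_one_sub {z : ℂ} (hz : ‖z‖ < 1) :
    HasSum (fun n : ℕ => (((-1) ^ (n + 1) + 1) / n : ℝ) * z ^ n)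
      (log (1 + z) - log (1 - z)) := by
  convert (hasSum_taylorSeries_log hz).add (hasSum_taylorSeries_neg_log hz) using 1
  · funext n; push_cast; ring
  · ring

theorem norm_artanh_le {z : ℂ} (hz : ‖z‖ < 1) : ‖artanh z‖ ≤ Real.artanh ‖z‖ := by
  have hσ : ‖(‖z‖ : ℂ)‖ < 1 := by simpa using hz
  have hreal : HasSum (fun n : ℕ => (((-1) ^ (n + 1) + 1) / n : ℝ) * ‖z‖ ^ n)
      (Real.log (1 + ‖z‖) - Real.log (1 - ‖z‖)) := by
    rw [← hasSum_ofReal]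
    convert hasSum_log_one_add_sub_log_one_sub hσ using 1
    · funext n; push_cast; ring
    · push_cast [ofReal_log (by positivity : (0 : ℝ) ≤ 1 + ‖z‖),
        ofReal_log (by linarith : (0 : ℝ) ≤ 1 - ‖z‖)]
      rfl
  have hcoef : ∀ n : ℕ, 0 ≤ (((-1) ^ (n + 1) + 1) / n : ℝ) := fun n => by
    rcases neg_one_pow_eq_or ℝ (n + 1) with h | h <;> rw [h] <;> positivity
  have hle := (hasSum_log_one_add_sub_log_one_sub hz).norm_le_of_bounded hreal fun n => by
    rw [norm_mul, norm_pow, norm_real, Real.norm_of_nonneg (hcoef n)]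
  rw [artanh, norm_div, Real.artanh_eq_half_log ⟨by linarith [norm_nonneg z], hz.le⟩,
    Real.log_div (by positivity) (by linarith)]
  norm_num
  linarith

theorem one_sub_mem_slitPlane_of_norm_lt_one {z : ℂ} (hz : ‖z‖ < 1) :
    1 - z ∈ slitPlane := by
  simpa [sub_eq_add_neg] using mem_slitPlane_of_norm_lt_one (by simpa using hz : ‖-z‖ < 1)

theorem analyticOnNhd_artanh : AnalyticOnNhd ℂ artanh (ball 0 1) := fun z hz => by
  have hz : ‖z‖ < 1 := mem_ball_zero_iff.mp hz
  exact (((analyticAt_const.add analyticAt_id).clog (mem_slitPlane_of_norm_lt_one hz)).sub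
    ((analyticAt_const.sub analyticAt_id).clog (one_sub_mem_slitPlane_of_norm_lt_one hz))).div_const

end Complex

theorem bean_artanh_sq_sub_one {w : ℂ} (hw : 0 < w.re) (h : ‖w ^ 2 - 1‖ < 1) :
    Bean (artanh (w ^ 2 - 1)) = w := by
  rw [Bean, tanh_artanh (slitPlane_ne_zero (mem_slitPlane_of_norm_lt_one h))
    (slitPlane_ne_zero (one_sub_mem_slitPlane_of_norm_lt_one h)), add_sub_cancel, one_div,
    sq_cpow_two_inv hw]

theorem subord_bean_of_re_pos_of_norm_sq_sub_one_lt {p : ℂ → ℂ}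
    (hp : AnalyticOnNhd ℂ p unitDisk) (hp0 : p 0 = 1) (hre : ∀ z ∈ unitDisk, 0 < (p z).re)
    (hsq : ∀ z ∈ unitDisk, ‖p z ^ 2 - 1‖ < Real.tanh 1) :
    Subord p Bean := by
  have hsq' : ∀ z ∈ unitDisk, ‖p z ^ 2 - 1‖ < 1 := fun z hz =>
    (hsq z hz).trans (Real.tanh_lt_one 1)
  refine ⟨fun z => artanh (p z ^ 2 - 1), fun z hz => ?_, by simp [hp0], fun z hz => ?_,
    fun z hz => (bean_artanh_sq_sub_one (hre z hz) (hsq' z hz)).symm⟩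
  · exact (analyticOnNhd_artanh _ (mem_ball_zero_iff.mpr (hsq' z hz))).comp
      (f := fun z => p z ^ 2 - 1) (((hp z hz).pow 2).sub analyticAt_const)
  · calc ‖artanh (p z ^ 2 - 1)‖ ≤ Real.artanh ‖p z ^ 2 - 1‖ := norm_artanh_le (hsq' z hz)
      _ < Real.artanh (Real.tanh 1) :=
        Real.artanh_lt_artanh (by linarith [norm_nonneg (p z ^ 2 - 1)]) (Real.tanh_lt_one 1)
          (hsq z hz)
      _ = 1 := Real.artanh_tanh 1

theorem norm_sq_sub_one_le (w : ℂ) : ‖w ^ 2 - 1‖ ≤ (‖w - 1‖ + 1) ^ 2 - 1 :=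
  calc ‖w ^ 2 - 1‖ = ‖w - 1‖ * ‖w - 1 + 2‖ := by rw [← norm_mul]; ring_nf
    _ ≤ ‖w - 1‖ * (‖w - 1‖ + 2) := by
      gcongr; exact (norm_add_le _ _).trans_eq (by norm_num)
    _ = (‖w - 1‖ + 1) ^ 2 - 1 := by ring

theorem re_pos_and_norm_sq_sub_one_lt_of_mul_norm_sub_one_lt_re {a k : ℝ} {w : ℂ} (ha : 1 < a)
    (hk : a / (a - 1) ≤ k) (hw : k * ‖w - 1‖ < w.re) :
    0 < w.re ∧ ‖w ^ 2 - 1‖ < a ^ 2 - 1 := by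
  set x := ‖w - 1‖
  have hx : 0 ≤ x := norm_nonneg _
  have hk1 : 1 < k := (one_lt_div (by linarith)).mpr (by linarith) |>.trans_le hk
  have hre : w.re ≤ x + 1 := (re_le_norm w).trans (by simpa using norm_le_norm_sub_add w 1)
  have hxa : x < a - 1 := by
    have : a / (a - 1) * x ≤ k * x := mul_le_mul_of_nonneg_right hk hx
    rw [div_mul_eq_mul_div, div_le_iff₀ (by linarith)] at this
    nlinarith
  refine ⟨by nlinarith, (norm_sq_sub_one_le w).trans_lt ?_⟩
  nlinarith

theorem one_lt_two_mul_exp_one_div_sqrt : 1 < 2 * Real.exp 1 / √(2 * (1 + Real.exp 1 ^ 2)) := by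
  have he : 1 < Real.exp 1 := Real.one_lt_exp_iff.mpr one_pos
  rw [one_lt_div (by positivity), Real.sqrt_lt' (by positivity)]
  nlinarith

theorem two_mul_exp_one_div_sqrt_sq :
    (2 * Real.exp 1 / √(2 * (1 + Real.exp 1 ^ 2))) ^ 2 = 1 + Real.tanh 1 := by
  rw [div_pow, Real.sq_sqrt (by positivity), Real.tanh_eq, Real.exp_neg]
  field_simp
  ring

/-- k-𝒮𝒯 ⊂ 𝒮*_𝔅 for k ≥ 2e/(2e − √(2(1+e²))). -/
theorem kStarlikeSubsetBean (k : ℝ)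
    (hk : 2 * Real.exp 1 / (2 * Real.exp 1 - Real.sqrt (2 * (1 + Real.exp 1 ^ 2))) ≤ k)
    (p : ℂ → ℂ) (hp : AnalyticOnNhd ℂ p unitDisk) (hp0 : p 0 = 1)
    (hre : ∀ z ∈ unitDisk, k * ‖p z - 1‖ < (p z).re) :
    Subord p Bean := by
  set a := 2 * Real.exp 1 / √(2 * (1 + Real.exp 1 ^ 2)) with ha_def
  have ha : 1 < a := one_lt_two_mul_exp_one_div_sqrt
  have hka : a / (a - 1) ≤ k := by
    have hc : √(2 * (1 + Real.exp 1 ^ 2)) ≠ 0 := by positivity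
    rwa [ha_def, div_sub_one hc, div_div_div_cancel_right₀ hc]
  have hw := fun z hz => re_pos_and_norm_sq_sub_one_lt_of_mul_norm_sub_one_lt_re ha hka (hre z hz)
  refine subord_bean_of_re_pos_of_norm_sq_sub_one_lt hp hp0 (fun z hz => (hw z hz).1)
    fun z hz => ?_
  linarith [(hw z hz).2, two_mul_exp_one_div_sqrt_sq]
end

section
/- Let α ∈ [0,1] and k ∈ {−1, 0, 1}, and let β be a nonzero complex number with Re β > 0 satisfying |β| ≥ ( R₀ + 2α + (1−α)√2 ) · 2^{(k+3)/2}, where R₀ = e·√(2/(1+e²)). If p is analytic and nonvanishing on 𝔻 with p(0) = 1 and (1−α)·p(z) + α·p(z)² + β·z·p'(z)/p(z)^k ≺ 𝔅(z), then p(z) ≺ (1+z)^{1/2}, where the square root is the principal branch. -/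
open Complex Metric

/-!
Put `w = p² - 1`. While `‖w‖ < 1` on a closed disk `‖z‖ ≤ ρ`, `Re p` cannot vanish there (that would
force `‖p² - 1‖ ≥ 1`), so `Re p > 0`; then `p` and `p²`, hence also `(1 - α) p + α p²`, lie in the closed
disk of centre `1` and radius `1`. Together with `‖𝔅 - 1‖ ≤ ‖tanh‖ ≤ √3` and `‖p‖ ^ (k + 1) ≤ 2 ^ ((k + 1) / 2)`,
the subordination gives `‖z w'(z)‖ ≤ c := (1 + √3) 2 ^ ((k + 3) / 2) / ‖β‖` on `‖z‖ = ρ`, and `c < 1` by the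
bound on `‖β‖`. The maximum principle for `w'` and the mean value inequality turn this into `‖w‖ ≤ c` on the
disk, and a continuity argument in `ρ` yields `‖w‖ ≤ c < 1` on all of `𝔻`. So `w` is a Schwarz function with
`p = (1 + w) ^ (1 / 2)`, the principal root being the one with positive real part.
-/

open scoped Real

namespace Complex

theorem norm_sub_one_le_norm_sq_sub_one {a : ℂ} (ha : 0 ≤ a.re) : ‖a - 1‖ ≤ ‖a ^ 2 - 1‖ := by
  have h1 : 1 ≤ ‖a + 1‖ := by
    simpa using (show (1 : ℝ) ≤ (a + 1).re by simp [ha]).trans (re_le_norm _)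
  calc ‖a - 1‖ ≤ ‖a - 1‖ * ‖a + 1‖ := le_mul_of_one_le_right (norm_nonneg _) h1
    _ = ‖a ^ 2 - 1‖ := by rw [← norm_mul]; ring_nf

theorem re_ne_zero_of_norm_sq_sub_one_lt_one {a : ℂ} (ha : ‖a ^ 2 - 1‖ < 1) : a.re ≠ 0 := by
  intro h
  have hre : (a ^ 2 - 1).re = -(a.im ^ 2 + 1) := by simp [sq, h]; ring
  have := (abs_re_le_norm (a ^ 2 - 1)).trans_lt ha
  rw [hre, abs_neg, abs_of_pos (by positivity)] at this
  nlinarith [sq_nonneg a.im]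

theorem re_cpow_one_div_two_nonneg (w : ℂ) : 0 ≤ (w ^ ((1 : ℂ) / 2)).re := by
  rw [one_div, cpow_inv_two_re]
  exact Real.sqrt_nonneg _

theorem norm_cpow_one_div_two_sub_one_le (w : ℂ) : ‖w ^ ((1 : ℂ) / 2) - 1‖ ≤ ‖w - 1‖ := by
  have hsq : (w ^ ((1 : ℂ) / 2)) ^ 2 = w := by
    rw [one_div]; exact_mod_cast cpow_nat_inv_pow w two_ne_zero
  simpa [hsq] using norm_sub_one_le_norm_sq_sub_one (re_cpow_one_div_two_nonneg w)

theorem normSq_sinh (z : ℂ) : normSq (sinh z) = Real.sinh z.re ^ 2 + Real.sin z.im ^ 2 := by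
  conv_lhs => rw [← re_add_im z]
  rw [sinh_add, sinh_mul_I, cosh_mul_I, ← ofReal_sinh, ← ofReal_cosh, ← ofReal_sin, ← ofReal_cos,
    show (Real.sinh z.re : ℂ) * Real.cos z.im + Real.cosh z.re * (Real.sin z.im * I) =
      ((Real.sinh z.re * Real.cos z.im : ℝ) : ℂ) + ((Real.cosh z.re * Real.sin z.im : ℝ) : ℂ) * I by
      push_cast; ring, normSq_add_mul_I]
  nlinarith [Real.cosh_sq z.re, Real.sin_sq_add_cos_sq z.im]

theorem normSq_cosh (z : ℂ) : normSq (cosh z) = Real.sinh z.re ^ 2 + Real.cos z.im ^ 2 := by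
  conv_lhs => rw [← re_add_im z]
  rw [cosh_add, sinh_mul_I, cosh_mul_I, ← ofReal_sinh, ← ofReal_cosh, ← ofReal_sin, ← ofReal_cos,
    show (Real.cosh z.re : ℂ) * Real.cos z.im + Real.sinh z.re * (Real.sin z.im * I) =
      ((Real.cosh z.re * Real.cos z.im : ℝ) : ℂ) + ((Real.sinh z.re * Real.sin z.im : ℝ) : ℂ) * I by
      push_cast; ring, normSq_add_mul_I]
  nlinarith [Real.cosh_sq z.re, Real.sin_sq_add_cos_sq z.im]

theorem norm_tanh_le_sqrt_three {z : ℂ} (hz : |z.im| ≤ π / 3) : ‖tanh z‖ ≤ √3 := by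
  have hcos : 1 / 2 ≤ Real.cos z.im := by
    rw [← Real.cos_abs, ← Real.cos_pi_div_three]
    exact Real.cos_le_cos_of_nonneg_of_le_pi (abs_nonneg _) (by linarith [Real.pi_pos]) hz
  have hsq : ‖sinh z‖ ^ 2 ≤ (√3 * ‖cosh z‖) ^ 2 := by
    rw [mul_pow, Real.sq_sqrt zero_le_three, Complex.sq_norm, Complex.sq_norm, normSq_sinh,
      normSq_cosh]
    nlinarith [Real.sin_sq_add_cos_sq z.im, sq_nonneg (Real.sinh z.re)]
  rw [tanh_eq_sinh_div_cosh, norm_div]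
  exact div_le_of_le_mul₀ (norm_nonneg _) (by positivity)
    ((pow_le_pow_iff_left₀ (norm_nonneg _) (by positivity) two_ne_zero).1 hsq)

end Complex

theorem norm_bean_sub_one_le {z : ℂ} (hz : ‖z‖ < 1) : ‖Bean z - 1‖ ≤ √3 :=
  calc ‖Bean z - 1‖ ≤ ‖1 + tanh z - 1‖ := norm_cpow_one_div_two_sub_one_le _
    _ = ‖tanh z‖ := by rw [add_sub_cancel_left]
    _ ≤ √3 := norm_tanh_le_sqrt_three <|
      (abs_im_le_norm z).trans (hz.le.trans (by linarith [Real.pi_gt_three]))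

theorem one_add_sqrt_three_lt : 1 + √3 < Real.exp 1 * √(2 / (1 + Real.exp 1 ^ 2)) + √2 := by
  have he : 2.7 < Real.exp 1 := lt_trans (by norm_num) Real.exp_one_gt_d9
  have h3 : √3 < 1.7321 := (Real.sqrt_lt' (by norm_num)).2 (by norm_num)
  have h2 : 1.4142 < √2 := (Real.lt_sqrt (by norm_num)).2 (by norm_num)
  have hR : 1.318 < Real.exp 1 * √(2 / (1 + Real.exp 1 ^ 2)) := by
    have hs := Real.sq_sqrt (show 0 ≤ 2 / (1 + Real.exp 1 ^ 2) by positivity)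
    refine lt_of_pow_lt_pow_left₀ 2 (by positivity) ?_
    rw [mul_pow, hs, mul_div_assoc', lt_div_iff₀ (by positivity)]
    nlinarith
  linarith

theorem two_mul_zpow_add_one_le {x : ℝ} (hx0 : 0 ≤ x) (hx : x ^ 2 ≤ 2) {k : ℤ} (hk : -1 ≤ k) :
    2 * x ^ (k + 1) ≤ (2 : ℝ) ^ (((k : ℝ) + 3) / 2) := by
  have hx2 : x ≤ (2 : ℝ) ^ (1 / 2 : ℝ) := by
    rw [← Real.sqrt_eq_rpow]; exact Real.le_sqrt_of_sq_le hx
  have hk1 : (0 : ℝ) ≤ (k + 1 : ℤ) := by exact_mod_cast (by omega : (0 : ℤ) ≤ k + 1)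
  calc 2 * x ^ (k + 1) = 2 * x ^ ((k + 1 : ℤ) : ℝ) := by rw [Real.rpow_intCast]
    _ ≤ 2 * ((2 : ℝ) ^ (1 / 2 : ℝ)) ^ ((k + 1 : ℤ) : ℝ) := by
      gcongr
    _ = (2 : ℝ) ^ (((k : ℝ) + 3) / 2) := by
      rw [← Real.rpow_mul zero_le_two, mul_comm, ← Real.rpow_add_one two_ne_zero]
      push_cast; ring_nf

theorem norm_two_mul_mul_le_of_add_div_zpow_eq {α : ℝ} (hα0 : 0 ≤ α) (hα1 : α ≤ 1) {k : ℤ}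
    (hk : -1 ≤ k) {β a q B : ℂ} (hβ : β ≠ 0) (ha : ‖a ^ 2 - 1‖ ≤ 1) (hre : 0 < a.re)
    (hB : ‖B - 1‖ ≤ √3) (h : (1 - α) * a + α * a ^ 2 + β * q / a ^ k = B) :
    ‖2 * a * q‖ ≤ (1 + √3) * 2 ^ (((k : ℝ) + 3) / 2) / ‖β‖ := by
  set S := (1 - α) * a + α * a ^ 2
  have ha0 : a ≠ 0 := fun h0 => by simp [h0] at hre
  have hS : ‖S - 1‖ ≤ 1 := by
    have hmem := convex_closedBall (1 : ℂ) 1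
      (mem_closedBall_iff_norm.2 ((norm_sub_one_le_norm_sq_sub_one hre.le).trans ha))
      (mem_closedBall_iff_norm.2 ha) (sub_nonneg.2 hα1) hα0 (sub_add_cancel 1 α)
    simpa [S, real_smul, dist_eq_norm] using hmem
  have hBS : ‖B - S‖ ≤ √3 + 1 :=
    calc ‖B - S‖ = ‖(B - 1) - (S - 1)‖ := by ring_nf
      _ ≤ √3 + 1 := (norm_sub_le _ _).trans (add_le_add hB hS)
  have hq : β * q = (B - S) * a ^ k :=
    (div_eq_iff (zpow_ne_zero k ha0)).1 (eq_sub_of_add_eq' h)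
  have hprod : β * (2 * a * q) = 2 * (B - S) * a ^ (k + 1) := by
    rw [zpow_add_one₀ ha0]; linear_combination 2 * a * hq
  have hnorm : ‖a‖ ^ 2 ≤ 2 := by
    rw [← norm_pow]
    linarith [norm_le_norm_sub_add (a ^ 2) 1, norm_one (α := ℂ)]
  rw [le_div_iff₀' (norm_pos_iff.2 hβ), ← norm_mul, hprod, norm_mul, norm_mul, norm_zpow]
  calc ‖(2 : ℂ)‖ * ‖B - S‖ * ‖a‖ ^ (k + 1) = ‖B - S‖ * (2 * ‖a‖ ^ (k + 1)) := by simp; ring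
    _ ≤ (1 + √3) * 2 ^ (((k : ℝ) + 3) / 2) := by
      gcongr
      · linarith
      · exact two_mul_zpow_add_one_le (norm_nonneg a) hnorm hk

theorem norm_le_of_norm_mul_deriv_le {f : ℂ → ℂ} {R ρ c : ℝ}
    (hf : DifferentiableOn ℂ f (ball 0 R)) (hρ : 0 < ρ) (hρR : ρ < R) (hf0 : f 0 = 0)
    (h : ∀ z ∈ sphere (0 : ℂ) ρ, ‖z * deriv f z‖ ≤ c) : ∀ z ∈ closedBall (0 : ℂ) ρ, ‖f z‖ ≤ c := by
  have hsub : closedBall (0 : ℂ) ρ ⊆ ball 0 R := closedBall_subset_ball hρR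
  have hc : 0 ≤ c := (norm_nonneg _).trans (h ρ (by simp [abs_of_pos hρ]))
  have hderiv : ∀ z ∈ closedBall (0 : ℂ) ρ, ‖deriv f z‖ ≤ c / ρ := by
    intro z hz
    refine norm_le_of_forall_mem_frontier_norm_le isBounded_ball ?_ (fun y hy => ?_)
      (by rwa [closure_ball 0 hρ.ne'])
    · refine DifferentiableOn.diffContOnCl ?_
      rw [closure_ball 0 hρ.ne']
      exact (hf.deriv isOpen_ball).mono hsub
    · rw [frontier_ball 0 hρ.ne'] at hy
      have := h y hy
      rw [norm_mul, mem_sphere_zero_iff_norm.1 hy] at this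
      rwa [le_div_iff₀' hρ]
  intro z hz
  have hmvt := (convex_closedBall (0 : ℂ) ρ).norm_image_sub_le_of_norm_deriv_le
    (fun y hy => hf.differentiableAt (isOpen_ball.mem_nhds (hsub hy))) hderiv
    (mem_closedBall_self hρ.le) hz
  rw [hf0, sub_zero, sub_zero] at hmvt
  calc ‖f z‖ ≤ c / ρ * ‖z‖ := hmvt
    _ ≤ c / ρ * ρ := by gcongr; exact mem_closedBall_zero_iff.1 hz
    _ = c := div_mul_cancel₀ c hρ.ne'

theorem norm_le_of_norm_lt_imp_norm_le {E F : Type*} [NormedAddCommGroup E] [NormedSpace ℝ E]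
    [ProperSpace E] [SeminormedAddCommGroup F] {f : E → F} {R c : ℝ}
    (hf : ContinuousOn f (ball 0 R)) (hc : c < 1) (hf0 : ‖f 0‖ ≤ c)
    (himp : ∀ ρ ∈ Set.Ioo 0 R, (∀ z ∈ closedBall (0 : E) ρ, ‖f z‖ < 1) →
      ∀ z ∈ closedBall (0 : E) ρ, ‖f z‖ ≤ c) :
    ∀ z ∈ ball (0 : E) R, ‖f z‖ ≤ c := by
  set s : Set ℝ := {r | ∀ y ∈ ball (0 : E) r, ‖f y‖ ≤ c}
  have hs : IsClosed s := by
    have : s = ⋂ y ∈ {y : E | c < ‖f y‖}, Set.Iic ‖y‖ := by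
      ext r
      simp only [s, mem_ball_zero_iff, Set.mem_ofPred_eq, Set.mem_iInter, Set.mem_Iic]
      exact ⟨fun h y hy => le_of_not_gt fun h' => not_lt.2 (h y h') hy,
        fun h y hy => le_of_not_gt fun h' => not_lt.2 (h y h') hy⟩
    rw [this]
    exact isClosed_biInter fun y _ => isClosed_Iic
  intro z hz
  obtain ⟨b, hzb, hbR⟩ := exists_between (mem_ball_zero_iff.1 hz)
  suffices Set.Icc 0 b ⊆ s from this ⟨(norm_nonneg z).trans hzb.le, le_rfl⟩ z (by simpa)
  refine (hs.inter isClosed_Icc).Icc_subset_of_forall_mem_nhdsWithin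
    (fun y hy => absurd (mem_ball_zero_iff.1 hy) (not_lt.2 (norm_nonneg y))) ?_
  rintro r ⟨hr, hr0, hrb⟩
  -- The gap `c < 1` lets the bound on `closedBall 0 r` spread to a slightly larger ball.
  have hball : closedBall (0 : E) r ⊆ ball 0 R ∩ f ⁻¹' ball 0 1 := by
    intro y hy
    refine ⟨closedBall_subset_ball (hrb.trans hbR) hy, mem_ball_zero_iff.2 (lt_of_le_of_lt ?_ hc)⟩
    rcases hr0.eq_or_lt with rfl | hr0
    · rw [closedBall_zero, Set.mem_singleton_iff] at hy
      rwa [hy]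
    · refine le_on_closure (f := fun y => ‖f y‖) (g := fun _ => c) hr ?_ continuousOn_const
        (by rwa [closure_ball 0 hr0.ne'])
      rw [closure_ball 0 hr0.ne']
      exact (hf.mono (closedBall_subset_ball (hrb.trans hbR))).norm
  obtain ⟨δ, hδ, hδsub⟩ := (isCompact_closedBall (0 : E) r).exists_cthickening_subset_open
    (hf.isOpen_inter_preimage isOpen_ball isOpen_ball) hball
  rw [cthickening_closedBall hδ.le hr0] at hδsub
  set r' := min (δ + r) b
  have hr' : r < r' := lt_min (by linarith) hrb
  have hgood : ∀ y ∈ closedBall (0 : E) r', ‖f y‖ ≤ c := by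
    refine himp r' ⟨hr0.trans_lt hr', (min_le_right _ _).trans_lt hbR⟩ fun y hy => ?_
    have := hδsub (closedBall_subset_closedBall (min_le_left _ _) hy)
    simpa using this.2
  exact Filter.mem_of_superset (Ico_mem_nhdsGT hr') fun t ht y hy =>
    hgood y (ball_subset_closedBall.trans (closedBall_subset_closedBall ht.2.le) hy)

theorem IsPreconnected.re_pos_of_norm_sq_sub_one_lt_one {X : Type*} [TopologicalSpace X]
    {V : Set X} (hV : IsPreconnected V) {f : X → ℂ} (hf : ContinuousOn f V)
    (hlt : ∀ z ∈ V, ‖f z ^ 2 - 1‖ < 1) {z₀ : X} (hz₀ : z₀ ∈ V) (h₀ : 0 < (f z₀).re) :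
    ∀ z ∈ V, 0 < (f z).re := by
  intro z hz
  by_contra! hle
  obtain ⟨y, hy, hy0⟩ := hV.intermediate_value hz hz₀ (continuous_re.comp_continuousOn hf)
    ⟨hle, h₀.le⟩
  exact re_ne_zero_of_norm_sq_sub_one_lt_one (hlt y hy) hy0

theorem norm_sq_sub_one_le_of_bean_eq {α : ℝ} {k : ℤ} {β : ℂ} {p ω : ℂ → ℂ}
    (hα0 : 0 ≤ α) (hα1 : α ≤ 1) (hk : -1 ≤ k) (hβ : β ≠ 0)
    (hp : AnalyticOnNhd ℂ p unitDisk) (hp0 : p 0 = 1) (hω : ∀ z ∈ unitDisk, ‖ω z‖ < 1)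
    (heq : ∀ z ∈ unitDisk,
      (1 - (α : ℂ)) * p z + (α : ℂ) * p z ^ 2 + β * z * deriv p z / p z ^ k = Bean (ω z))
    {ρ : ℝ} (hρ : ρ ∈ Set.Ioo 0 1) (hlt : ∀ z ∈ closedBall (0 : ℂ) ρ, ‖p z ^ 2 - 1‖ < 1) :
    ∀ z ∈ closedBall (0 : ℂ) ρ, ‖p z ^ 2 - 1‖ ≤ (1 + √3) * 2 ^ (((k : ℝ) + 3) / 2) / ‖β‖ := by
  have hsub : closedBall (0 : ℂ) ρ ⊆ unitDisk := closedBall_subset_ball hρ.2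
  have hre := (convex_closedBall (0 : ℂ) ρ).isPreconnected.re_pos_of_norm_sq_sub_one_lt_one
    (hp.continuousOn.mono hsub) hlt (mem_closedBall_self hρ.1.le) (by simp [hp0])
  refine norm_le_of_norm_mul_deriv_le ((hp.differentiableOn.pow 2).sub_const 1) hρ.1 hρ.2
    (by simp [hp0]) fun z hz => ?_
  have hz' := sphere_subset_closedBall hz
  have hderiv : deriv (fun z => p z ^ 2 - 1) z = 2 * p z * deriv p z := by
    simpa using ((hp z (hsub hz')).differentiableAt.hasDerivAt.pow 2).sub_const 1 |>.deriv
  rw [hderiv, show z * (2 * p z * deriv p z) = 2 * p z * (z * deriv p z) by ring]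
  exact norm_two_mul_mul_le_of_add_div_zpow_eq hα0 hα1 hk hβ (hlt z hz').le (hre z hz')
    (norm_bean_sub_one_le (hω z (hsub hz'))) (by rw [← heq z (hsub hz')]; ring)

theorem diffSubordSqrt_general (α : ℝ) (hα0 : 0 ≤ α) (hα1 : α ≤ 1)
    (k : ℤ) (hk : k = -1 ∨ k = 0 ∨ k = 1)
    (β : ℂ)
    (hβ : (Real.exp 1 * Real.sqrt (2 / (1 + Real.exp 1 ^ 2)) + 2 * α
        + (1 - α) * Real.sqrt 2) * (2:ℝ) ^ (((k:ℝ) + 3) / 2) ≤ ‖β‖)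
    (p : ℂ → ℂ) (hp : AnalyticOnNhd ℂ p unitDisk)
    (hp0 : p 0 = 1)
    (hsub : Subord
      (fun z => (1 - (α:ℂ)) * p z + (α:ℂ) * (p z)^2 + β * z * deriv p z / (p z) ^ k)
      Bean) :
    Subord p (fun z => (1 + z) ^ ((1:ℂ)/2)) := by
  obtain ⟨ω, -, -, hω, heq⟩ := hsub
  have hβlt : (1 + √3) * 2 ^ (((k : ℝ) + 3) / 2) < ‖β‖ := by
    refine lt_of_lt_of_le ?_ hβ
    have : √2 ≤ 2 := Real.sqrt_le_iff.2 ⟨zero_le_two, by norm_num⟩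
    refine mul_lt_mul_of_pos_right ?_ (by positivity)
    nlinarith [one_add_sqrt_three_lt]
  have hβpos : 0 < ‖β‖ := lt_of_le_of_lt (by positivity) hβlt
  have hc := (div_lt_one hβpos).2 hβlt
  have hw := norm_le_of_norm_lt_imp_norm_le (f := fun z => p z ^ 2 - 1)
    ((hp.continuousOn.pow 2).sub continuousOn_const) hc (by simp [hp0]; positivity)
    fun ρ hρ => norm_sq_sub_one_le_of_bean_eq hα0 hα1 (by omega) (norm_pos_iff.1 hβpos) hp hp0
      hω heq hρ
  have hre := (convex_ball (0 : ℂ) 1).isPreconnected.re_pos_of_norm_sq_sub_one_lt_one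
    hp.continuousOn (fun z hz => (hw z hz).trans_lt hc) (mem_ball_self one_pos) (by simp [hp0])
  refine ⟨fun z => p z ^ 2 - 1, (hp.pow 2).sub analyticOnNhd_const, by simp [hp0],
    fun z hz => (hw z hz).trans_lt hc, fun z hz => ?_⟩
  show p z = (1 + (p z ^ 2 - 1)) ^ ((1 : ℂ) / 2)
  rw [add_sub_cancel, one_div]
  exact (sq_cpow_two_inv (hre z hz)).symm

/-- first-order differential subordination implying p ≺ √(1+z),
with k ∈ {−1,0,1}. -/
theorem diffSubordSqrt (α : ℝ) (hα0 : 0 ≤ α) (hα1 : α ≤ 1)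
    (k : ℤ) (hk : k = -1 ∨ k = 0 ∨ k = 1)
    (β : ℂ) (hβne : β ≠ 0) (hβre : 0 < β.re)
    (hβ : (Real.exp 1 * Real.sqrt (2 / (1 + Real.exp 1 ^ 2)) + 2 * α
        + (1 - α) * Real.sqrt 2) * (2:ℝ) ^ (((k:ℝ) + 3) / 2) ≤ ‖β‖)
    (p : ℂ → ℂ) (hp : AnalyticOnNhd ℂ p unitDisk)
    (hpne : ∀ z ∈ unitDisk, p z ≠ 0) (hp0 : p 0 = 1)
    (hsub : Subord
      (fun z => (1 - (α:ℂ)) * p z + (α:ℂ) * (p z)^2 + β * z * deriv p z / (p z) ^ k)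
      Bean) :
    Subord p (fun z => (1 + z) ^ ((1:ℂ)/2)) :=
  diffSubordSqrt_general α hα0 hα1 k hk β hβ p hp hp0 hsub
end

section
/- Let α ∈ [0,1) and set r_α = (√2·e − √(1+e²)) / ( (1−2α)·√(1+e²) + √2·e ). If p is analytic on 𝔻 and p ≺ (1+(1−2α)z)/(1−z), then for every z ∈ 𝔻 with |z| < r_α one has p(z) ∈ 𝔅(𝔻), i.e. there exists u ∈ 𝔻 with p(z) = 𝔅(u). In particular, for α = 0 the 𝒮*_𝔅-radius of the class of starlike functions is (√2·e − √(1+e²))/(√2·e + √(1+e²)) ≈ 0.1406. -/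
open Complex Metric

/-!
By the Schwarz lemma `p z = (1 + β w) / (1 - w)` with `β = 1 - 2α` and `‖w‖ ≤ ρ = ‖z‖`, so `p z`
lies in the image of the closed disk of radius `ρ` under this Möbius map: the disk with centre
`c = (1 + βρ²) / (1 - ρ²) ≥ 1` and radius `R`, where `c + R = (1 + βρ) / (1 - ρ)`. On that disk
`‖v² - 1‖ ≤ (c + R)² - 1 =: t`, and comparing the Taylor series of `artanh` at `v² - 1` and at `t`
gives `u` with `tanh u = v² - 1` and `‖u‖ ≤ artanh t`. Hence `‖u‖ < 1` as soon as
`(c + R)² < 1 + tanh 1 = 2e² / (1 + e²)`, which is exactly the condition `ρ < r_α`. Finally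
`(c + R)² < 2` forces `R < c`, so `Re v > 0` and `v` is the principal square root of
`1 + tanh u = v²`.
-/

theorem Subord.exists_norm_le_and_eq {p g : ℂ → ℂ} (h : Subord p g) {z : ℂ} (hz : z ∈ unitDisk) :
    ∃ w : ℂ, ‖w‖ ≤ ‖z‖ ∧ p z = g w := by
  obtain ⟨ω, hω, hω0, hω1, hpω⟩ := h
  refine ⟨ω z, ?_, hpω z hz⟩
  exact Complex.norm_le_norm_of_mapsTo_ball hω.differentiableOn
    (fun x hx ↦ mem_closedBall_zero_iff.2 (hω1 x hx).le) hω0 (mem_ball_zero_iff.1 hz)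

theorem Complex.hasSum_log_one_add_sub_log_one_sub_s16 {z : ℂ} (hz : ‖z‖ < 1) :
    HasSum (fun n : ℕ ↦ (z ^ n - (-z) ^ n) / n) (log (1 + z) - log (1 - z)) := by
  have h := (hasSum_taylorSeries_neg_log hz).sub
    (hasSum_taylorSeries_neg_log (z := -z) (by rwa [norm_neg]))
  rw [neg_sub_neg, sub_neg_eq_add] at h
  simpa only [sub_div] using h

theorem Real.hasSum_log_one_add_sub_log_one_sub_s16 {t : ℝ} (ht : |t| < 1) :
    HasSum (fun n : ℕ ↦ (t ^ n - (-t) ^ n) / n) (Real.log (1 + t) - Real.log (1 - t)) := by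
  have h1 : 0 ≤ 1 + t := by linarith [neg_abs_le t]
  have h2 : 0 ≤ 1 - t := by linarith [le_abs_self t]
  rw [← Complex.hasSum_ofReal]
  push_cast [Complex.ofReal_log h1, Complex.ofReal_log h2]
  exact Complex.hasSum_log_one_add_sub_log_one_sub_s16 (by rwa [Complex.norm_real, Real.norm_eq_abs])

theorem norm_log_one_add_sub_log_one_sub_le {s : ℂ} {t : ℝ} (hs : ‖s‖ ≤ t) (ht : t < 1) :
    ‖log (1 + s) - log (1 - s)‖ ≤ 2 * Real.artanh t := by
  have ht0 : 0 ≤ t := (norm_nonneg s).trans hs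
  have hterm (n : ℕ) : ‖(s ^ n - (-s) ^ n) / n‖ ≤ (t ^ n - (-t) ^ n) / n := by
    rcases n.even_or_odd with hn | hn
    · simp [hn.neg_pow]
    · rw [hn.neg_pow, hn.neg_pow, sub_neg_eq_add, sub_neg_eq_add, ← two_mul, ← two_mul, norm_div,
        norm_mul, norm_pow, Complex.norm_natCast, Complex.norm_ofNat]
      gcongr
  rw [Real.artanh_eq_half_log ⟨by linarith, ht.le⟩, Real.log_div (by linarith) (by linarith)]
  convert (Complex.hasSum_log_one_add_sub_log_one_sub_s16 (hs.trans_lt ht)).norm_le_of_bounded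
    (Real.hasSum_log_one_add_sub_log_one_sub_s16 (by rwa [abs_of_nonneg ht0])) hterm using 1
  ring

theorem Complex.tanh_half_log_one_add_sub_log_one_sub {s : ℂ} (h₁ : 1 + s ≠ 0) (h₂ : 1 - s ≠ 0) :
    tanh ((log (1 + s) - log (1 - s)) / 2) = s := by
  set a := exp (log (1 + s) / 2)
  set b := exp (log (1 - s) / 2)
  have ha : a ^ 2 = 1 + s := by
    rw [← exp_nat_mul, Nat.cast_two, mul_div_cancel₀ _ two_ne_zero, exp_log h₁]
  have hb : b ^ 2 = 1 - s := by
    rw [← exp_nat_mul, Nat.cast_two, mul_div_cancel₀ _ two_ne_zero, exp_log h₂]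
  have hexp : exp ((log (1 + s) - log (1 - s)) / 2) = a / b := by rw [sub_div, exp_sub]
  have hexp' : exp (-((log (1 + s) - log (1 - s)) / 2)) = b / a := by
    rw [exp_neg, hexp, inv_div]
  have ha0 : a ≠ 0 := exp_ne_zero _
  have hb0 : b ≠ 0 := exp_ne_zero _
  rw [tanh_eq_sinh_div_cosh, ← mul_div_mul_left _ _ (two_ne_zero' ℂ), two_sinh, two_cosh, hexp,
    hexp']
  field_simp
  rw [ha, hb]
  ring

theorem exists_tanh_eq_of_norm_le {s : ℂ} {t : ℝ} (hs : ‖s‖ ≤ t) (ht : t < 1) :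
    ∃ u : ℂ, ‖u‖ ≤ Real.artanh t ∧ tanh u = s := by
  have hs1 : ‖s‖ < 1 := hs.trans_lt ht
  refine ⟨(log (1 + s) - log (1 - s)) / 2, ?_, tanh_half_log_one_add_sub_log_one_sub ?_ ?_⟩
  · rw [norm_div, Complex.norm_two]
    linarith [norm_log_one_add_sub_log_one_sub_le hs ht]
  · exact slitPlane_ne_zero (mem_slitPlane_of_norm_lt_one hs1)
  · exact slitPlane_ne_zero (mem_slitPlane_of_norm_lt_one (z := -s) (by rwa [norm_neg]))

theorem bean_eq_of_tanh_eq {u v : ℂ} (hv : 0 < v.re) (h : tanh u = v ^ 2 - 1) : Bean u = v := by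
  rw [Bean, h, add_sub_cancel, one_div]
  exact sq_cpow_two_inv hv

/-- The circle `‖w‖ = ρ` is the Apollonius circle of the points `ρ ^ 2` and `1` with ratio `ρ`. -/
theorem norm_sub_sq_le_mul_norm_one_sub {w : ℂ} {ρ : ℝ} (hw : ‖w‖ ≤ ρ) (hρ : ρ ≤ 1) :
    ‖w - (ρ ^ 2 : ℝ)‖ ≤ ρ * ‖1 - w‖ := by
  have hρ0 : 0 ≤ ρ := (norm_nonneg w).trans hw
  have hw2 : w.re * w.re + w.im * w.im ≤ ρ ^ 2 := by
    rw [← normSq_apply, ← Complex.sq_norm]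
    exact pow_le_pow_left₀ (norm_nonneg w) hw 2
  rw [← sq_le_sq₀ (norm_nonneg _) (by positivity), mul_pow, Complex.sq_norm, Complex.sq_norm,
    Complex.normSq_apply, Complex.normSq_apply]
  simp only [sub_re, sub_im, ofReal_re, ofReal_im, one_re, one_im, sub_zero, zero_sub]
  nlinarith [mul_le_mul_of_nonneg_left hw2 (sub_nonneg.2 (pow_le_one₀ (n := 2) hρ0 hρ))]

theorem norm_moebius_sub_le {β ρ : ℝ} {w : ℂ} (hβ : -1 ≤ β) (hw : ‖w‖ ≤ ρ) (hρ : ρ < 1) :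
    ‖(1 + β * w) / (1 - w) - ((1 + β * ρ ^ 2) / (1 - ρ ^ 2) : ℝ)‖ ≤
      (1 + β) * ρ / (1 - ρ ^ 2) := by
  have hρ0 : 0 ≤ ρ := (norm_nonneg w).trans hw
  have hρ2 : 0 < 1 - ρ ^ 2 := by nlinarith
  have hw1 : 1 - w ≠ 0 := by
    rw [sub_ne_zero]
    rintro rfl
    rw [norm_one] at hw
    linarith
  have hid : (1 + β * w) / (1 - w) - ((1 + β * ρ ^ 2) / (1 - ρ ^ 2) : ℝ) =
      ((1 + β) / (1 - ρ ^ 2) : ℝ) * ((w - (ρ ^ 2 : ℝ)) / (1 - w)) := by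
    have : (1 : ℂ) - (ρ : ℂ) ^ 2 ≠ 0 := by exact_mod_cast hρ2.ne'
    push_cast
    field_simp
    ring
  have hq : ‖(w - (ρ ^ 2 : ℝ)) / (1 - w)‖ ≤ ρ := by
    rw [norm_div, div_le_iff₀ (norm_pos_iff.2 hw1)]
    exact norm_sub_sq_le_mul_norm_one_sub hw hρ.le
  have hβρ : 0 ≤ (1 + β) / (1 - ρ ^ 2) := div_nonneg (by linarith) hρ2.le
  calc _ = (1 + β) / (1 - ρ ^ 2) * ‖(w - (ρ ^ 2 : ℝ)) / (1 - w)‖ := by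
        rw [hid, norm_mul, Complex.norm_real, Real.norm_of_nonneg hβρ]
    _ ≤ (1 + β) / (1 - ρ ^ 2) * ρ := by gcongr
    _ = (1 + β) * ρ / (1 - ρ ^ 2) := by ring

theorem norm_sq_sub_one_le_of_norm_sub_le {v : ℂ} {c R : ℝ} (hv : ‖v - c‖ ≤ R) (hc : 1 ≤ c) :
    ‖v ^ 2 - 1‖ ≤ (c + R) ^ 2 - 1 := by
  have hvc : ‖v + c‖ ≤ R + 2 * c := by
    calc ‖v + c‖ = ‖(v - c) + (2 * c : ℝ)‖ := by push_cast; ring_nf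
      _ ≤ R + 2 * c := by
        grw [norm_add_le, hv, Complex.norm_real, Real.norm_of_nonneg (by linarith)]
  calc ‖v ^ 2 - 1‖ = ‖(v - c) * (v + c) + (c ^ 2 - 1 : ℝ)‖ := by push_cast; ring_nf
    _ ≤ R * (R + 2 * c) + (c ^ 2 - 1) := by
        grw [norm_add_le, norm_mul, hv, hvc, Complex.norm_real, Real.norm_of_nonneg (by nlinarith)]
        exact (norm_nonneg _).trans hv
    _ = (c + R) ^ 2 - 1 := by ring

theorem exists_bean_eq_of_norm_sub_le {v : ℂ} {c R : ℝ} (hv : ‖v - c‖ ≤ R) (hc : 1 ≤ c)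
    (hcR : (c + R) ^ 2 < 1 + Real.tanh 1) : ∃ u ∈ unitDisk, v = Bean u := by
  have htanh := Real.tanh_lt_one 1
  have hR0 : 0 ≤ R := (norm_nonneg _).trans hv
  have hR : R < c := by nlinarith
  have hre : 0 < v.re := by
    have := Complex.abs_re_le_norm (v - c)
    rw [sub_re, ofReal_re] at this
    linarith [(abs_le.1 (this.trans hv)).1]
  have ht : (c + R) ^ 2 - 1 < Real.tanh 1 := by linarith
  obtain ⟨u, hu, hut⟩ := exists_tanh_eq_of_norm_le (norm_sq_sub_one_le_of_norm_sub_le hv hc)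
    (ht.trans htanh)
  refine ⟨u, mem_ball_zero_iff.2 ?_, (bean_eq_of_tanh_eq hre hut).symm⟩
  calc ‖u‖ ≤ Real.artanh ((c + R) ^ 2 - 1) := hu
    _ < Real.artanh (Real.tanh 1) := Real.artanh_lt_artanh (by nlinarith) htanh ht
    _ = 1 := Real.artanh_tanh 1

theorem exists_bean_eq_moebius {β ρ : ℝ} {w : ℂ} (hβ : -1 ≤ β) (hw : ‖w‖ ≤ ρ) (hρ : ρ < 1)
    (hbound : ((1 + β * ρ) / (1 - ρ)) ^ 2 < 1 + Real.tanh 1) :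
    ∃ u ∈ unitDisk, (1 + β * w) / (1 - w) = Bean u := by
  have hρ0 : 0 ≤ ρ := (norm_nonneg w).trans hw
  refine exists_bean_eq_of_norm_sub_le (norm_moebius_sub_le hβ hw hρ) ?_ ?_
  · rw [one_le_div (by nlinarith)]
    nlinarith
  · have hcR : (1 + β * ρ ^ 2) / (1 - ρ ^ 2) + (1 + β) * ρ / (1 - ρ ^ 2) =
        (1 + β * ρ) / (1 - ρ) := by
      rw [← add_div, div_eq_div_iff (by nlinarith) (by linarith)]
      ring
    rwa [hcR]

theorem Real.one_add_tanh_one :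
    1 + Real.tanh 1 = (√2 * Real.exp 1 / √(1 + Real.exp 1 ^ 2)) ^ 2 := by
  rw [div_pow, mul_pow, Real.sq_sqrt zero_le_two, Real.sq_sqrt (by positivity), Real.tanh_eq,
    Real.exp_neg]
  have := Real.exp_pos 1
  field_simp
  ring

theorem sqrt_one_add_exp_one_sq_lt : √(1 + Real.exp 1 ^ 2) < √2 * Real.exp 1 := by
  rw [Real.sqrt_lt' (by positivity), mul_pow, Real.sq_sqrt zero_le_two]
  nlinarith [Real.one_lt_exp_iff.2 one_pos]

theorem lt_one_of_lt_radius {A B β ρ : ℝ} (hB : 0 < B) (hBA : B < A) (hβ : -1 ≤ β)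
    (hρ : ρ < (A - B) / (β * B + A)) : ρ < 1 := by
  have hD : 0 < β * B + A := by nlinarith
  rw [lt_div_iff₀ hD] at hρ
  by_contra! h
  nlinarith

theorem one_add_mul_div_one_sub_lt_of_lt_radius {A B β ρ : ℝ} (hB : 0 < B) (hBA : B < A)
    (hβ : -1 ≤ β) (hρ : ρ < (A - B) / (β * B + A)) : (1 + β * ρ) / (1 - ρ) < A / B := by
  have hρ1 := lt_one_of_lt_radius hB hBA hβ hρ
  have hD : 0 < β * B + A := by nlinarith
  rw [lt_div_iff₀ hD] at hρ
  rw [div_lt_div_iff₀ (by linarith) hB]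
  linarith

theorem beanRadiusStarlikeOrder_general (α : ℝ) (hα1 : α < 1) (rα : ℝ)
    (hrα : rα = (Real.sqrt 2 * Real.exp 1 - Real.sqrt (1 + Real.exp 1 ^ 2)) /
        ((1 - 2*α) * Real.sqrt (1 + Real.exp 1 ^ 2) + Real.sqrt 2 * Real.exp 1))
    (p : ℂ → ℂ)
    (hsub : Subord p (fun z => (1 + (1 - 2*(α:ℂ))*z) / (1 - z))) :
    ∀ z ∈ unitDisk, ‖z‖ < rα → ∃ u ∈ unitDisk, p z = Bean u := by
  intro z hz hzr
  obtain ⟨w, hwz, hpz⟩ := hsub.exists_norm_le_and_eq hz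
  have hβ : -1 ≤ 1 - 2 * α := by linarith
  have hB : 0 < √(1 + Real.exp 1 ^ 2) := by positivity
  rw [hrα] at hzr
  have hρ := lt_one_of_lt_radius hB sqrt_one_add_exp_one_sq_lt hβ hzr
  have hm := one_add_mul_div_one_sub_lt_of_lt_radius hB sqrt_one_add_exp_one_sq_lt hβ hzr
  have hbound : ((1 + (1 - 2 * α) * ‖z‖) / (1 - ‖z‖)) ^ 2 < 1 + Real.tanh 1 := by
    rw [Real.one_add_tanh_one]
    exact pow_lt_pow_left₀ hm (div_nonneg (by nlinarith [norm_nonneg z]) (by linarith)) two_ne_zero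
  obtain ⟨u, hu, hpu⟩ := exists_bean_eq_moebius hβ hwz hρ hbound
  refine ⟨u, hu, ?_⟩
  rw [hpz, ← hpu]
  push_cast
  ring

/-- 𝒮*_𝔅-radius for starlike functions of order α. -/
theorem beanRadiusStarlikeOrder (α : ℝ) (hα0 : 0 ≤ α) (hα1 : α < 1) (rα : ℝ)
    (hrα : rα = (Real.sqrt 2 * Real.exp 1 - Real.sqrt (1 + Real.exp 1 ^ 2)) /
        ((1 - 2*α) * Real.sqrt (1 + Real.exp 1 ^ 2) + Real.sqrt 2 * Real.exp 1))
    (p : ℂ → ℂ) (hp : AnalyticOnNhd ℂ p unitDisk)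
    (hsub : Subord p (fun z => (1 + (1 - 2*(α:ℂ))*z) / (1 - z))) :
    ∀ z ∈ unitDisk, ‖z‖ < rα → ∃ u ∈ unitDisk, p z = Bean u :=
  beanRadiusStarlikeOrder_general α hα1 rα hrα p hsub
end

section
/- Set r_e = 1 + log(√(2/(1+e²))) = 1 − (1/2)·log((1+e²)/2) ≈ 0.28311. If p is analytic on 𝔻 and p ≺ exp (i.e. p is subordinate to z ↦ e^z), then for every z ∈ 𝔻 with |z| < r_e one has p(z) ∈ 𝔅(𝔻), i.e. there exists u ∈ 𝔻 with p(z) = 𝔅(u). (This is the 𝒮*_𝔅-radius statement for the class 𝒮*_e, the case p(z) = zf'(z)/f(z).) -/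
open Complex Metric

/-!
By the Schwarz lemma `p z = exp w` with `‖w‖ ≤ ‖z‖`. Solving `1 + tanh u = exp (2 * w)` gives
`u = w - log (2 - exp (2 * w)) / 2`, and the series bounds `‖exp ζ - 1‖ ≤ exp ‖ζ‖ - 1`,
`‖log (1 + δ)‖ ≤ -log (1 - ‖δ‖)` yield `‖u‖ ≤ s - log (2 - exp (2 * s)) / 2` for `s = ‖w‖`.
This is `< 1` exactly when `exp (2 * s) * (1 + e⁻²) < 2`, i.e. when `s < r_e`.
-/

namespace Complex

lemma norm_exp_sub_one_le_exp_norm_sub_one (z : ℂ) : ‖exp z - 1‖ ≤ Real.exp ‖z‖ - 1 := by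
  simpa using norm_exp_sub_sum_le_exp_norm_sub_sum z 1

lemma norm_log_one_add_le_neg_log_one_sub {z : ℂ} (hz : ‖z‖ < 1) :
    ‖log (1 + z)‖ ≤ -Real.log (1 - ‖z‖) := by
  have hreal : HasSum (fun n : ℕ => ‖z‖ ^ n / n) (-Real.log (1 - ‖z‖)) := by
    refine (hasSum_nat_add_iff' 1).mp ?_
    simpa using Real.hasSum_pow_div_log_of_abs_lt_one (by rwa [abs_norm])
  have hnorm : HasSum (fun n : ℕ => ‖(-1 : ℂ) ^ (n + 1) * z ^ n / n‖) (-Real.log (1 - ‖z‖)) := by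
    simpa [norm_div, norm_pow] using hreal
  rw [← (hasSum_taylorSeries_log hz).tsum_eq, ← hnorm.tsum_eq]
  exact norm_tsum_le_tsum_norm hnorm.summable

lemma norm_log_two_sub_exp_le {z : ℂ} (hz : Real.exp ‖z‖ < 2) :
    ‖log (2 - exp z)‖ ≤ -Real.log (2 - Real.exp ‖z‖) := by
  have hδ : ‖1 - exp z‖ ≤ Real.exp ‖z‖ - 1 := by
    rw [norm_sub_rev]
    exact norm_exp_sub_one_le_exp_norm_sub_one z
  have hlog := norm_log_one_add_le_neg_log_one_sub (hδ.trans_lt (by linarith))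
  rw [show (1 : ℂ) + (1 - exp z) = 2 - exp z by ring] at hlog
  have hmono : Real.log (2 - Real.exp ‖z‖) ≤ Real.log (1 - ‖1 - exp z‖) :=
    Real.log_le_log (by linarith) (by linarith)
  linarith

lemma one_add_tanh_eq_of_exp_two_mul {u c : ℂ} (h : exp (2 * u) * (2 - c) = c) :
    1 + tanh u = c := by
  have hexp : exp (2 * u) = exp u * exp u := by rw [two_mul, exp_add]
  have hcosh : 2 * cosh u * exp u = exp (2 * u) + 1 := by
    have hinv : exp (-u) * exp u = 1 := by rw [← exp_add, neg_add_cancel, exp_zero]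
    rw [two_cosh, hexp]
    linear_combination hinv
  have hcosh0 : cosh u ≠ 0 := by
    intro h0
    rw [h0, mul_zero, zero_mul, eq_comm, add_eq_zero_iff_eq_neg] at hcosh
    rw [hcosh] at h
    exact (two_ne_zero : (2 : ℂ) ≠ 0) (by linear_combination -h)
  have hexp_eq : exp u = c * cosh u := by
    refine mul_left_cancel₀ (mul_ne_zero two_ne_zero (exp_ne_zero u)) ?_
    linear_combination h - 2 * hexp - c * hcosh
  rw [tanh_eq_sinh_div_cosh, ← div_self hcosh0, ← add_div, cosh_add_sinh, hexp_eq,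
    mul_div_cancel_right₀ _ hcosh0]

end Complex

lemma bean_eq_exp_of_one_add_tanh_eq {u w : ℂ} (hu : 1 + tanh u = exp (2 * w))
    (hw : |w.im| < Real.pi / 2) : Bean u = exp w := by
  have him : |(2 * w).im| < Real.pi := by
    simp only [mul_im, re_ofNat, im_ofNat, zero_mul, add_zero, abs_mul, Nat.abs_ofNat]
    linarith
  rw [Bean, hu, cpow_def_of_ne_zero (exp_ne_zero _), log_exp (by linarith [(abs_lt.mp him).1])
    (abs_lt.mp him).2.le, show 2 * w * (1 / 2) = w by ring]

lemma exists_bean_eq_exp {w : ℂ} (hw : Real.exp (2 * ‖w‖ - 2) < 2 - Real.exp (2 * ‖w‖)) :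
    ∃ u ∈ unitDisk, Bean u = exp w := by
  have hnorm : ‖2 * w‖ = 2 * ‖w‖ := by simp
  have hexp_lt : Real.exp (2 * ‖w‖) < 2 := by linarith [Real.exp_pos (2 * ‖w‖ - 2)]
  have hw_half : ‖w‖ < 1 / 2 := by linarith [Real.add_one_le_exp (2 * ‖w‖)]
  have hne : 2 - exp (2 * w) ≠ 0 := by
    intro h0
    have h2 : ‖exp (2 * w)‖ = 2 := by rw [← sub_eq_zero.mp h0]; simp
    linarith [hnorm ▸ norm_exp_le_exp_norm (2 * w)]
  have hlog : ‖log (2 - exp (2 * w))‖ < 2 - 2 * ‖w‖ := by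
    refine (norm_log_two_sub_exp_le (hnorm ▸ hexp_lt)).trans_lt ?_
    rw [hnorm, neg_lt, ← Real.log_exp (-(2 - 2 * ‖w‖))]
    exact Real.log_lt_log (Real.exp_pos _) (by rwa [neg_sub])
  refine ⟨w - log (2 - exp (2 * w)) / 2, ?_, bean_eq_exp_of_one_add_tanh_eq ?_ ?_⟩
  · rw [unitDisk, mem_ball_zero_iff]
    calc ‖w - log (2 - exp (2 * w)) / 2‖ ≤ ‖w‖ + ‖log (2 - exp (2 * w))‖ / 2 := by
          simpa using norm_sub_le w (log (2 - exp (2 * w)) / 2)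
      _ < 1 := by linarith
  · refine one_add_tanh_eq_of_exp_two_mul ?_
    rw [show 2 * (w - log (2 - exp (2 * w)) / 2) = 2 * w - log (2 - exp (2 * w)) by ring,
      exp_sub, exp_log hne, div_mul_cancel₀ _ hne]
  · linarith [abs_im_le_norm w, Real.pi_gt_three]

noncomputable def expBeanRadius : ℝ := 1 + Real.log (Real.sqrt (2 / (1 + Real.exp 1 ^ 2)))

lemma exp_two_mul_sub_two_lt_of_lt_expBeanRadius {s : ℝ} (hs : s < expBeanRadius) :
    Real.exp (2 * s - 2) < 2 - Real.exp (2 * s) := by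
  have hpos : (0 : ℝ) < 1 + Real.exp 1 ^ 2 := by positivity
  rw [expBeanRadius, Real.log_sqrt (by positivity)] at hs
  have hlt : Real.exp (2 * s - 2) < 2 / (1 + Real.exp 1 ^ 2) :=
    (Real.lt_log_iff_exp_lt (by positivity)).mp (by linarith)
  have hsplit : Real.exp (2 * s) = Real.exp (2 * s - 2) * Real.exp 1 ^ 2 := by
    rw [sq, ← Real.exp_add, ← Real.exp_add]
    ring_nf
  rw [lt_div_iff₀ hpos] at hlt
  linarith

theorem beanRadiusExp_general (re : ℝ)
    (hre : re = 1 + Real.log (Real.sqrt (2 / (1 + Real.exp 1 ^ 2))))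
    (p : ℂ → ℂ)
    (hsub : Subord p Complex.exp) :
    ∀ z ∈ unitDisk, ‖z‖ < re → ∃ u ∈ unitDisk, p z = Bean u := by
  intro z hz hzre
  obtain ⟨ω, hω, hω0, hω_lt, hp⟩ := hsub
  have hschwarz : ‖ω z‖ ≤ ‖z‖ :=
    norm_le_norm_of_mapsTo_ball (fun x hx => (hω x hx).differentiableAt.differentiableWithinAt)
      (fun x hx => ball_subset_closedBall (mem_ball_zero_iff.mpr (hω_lt x hx))) hω0
      (mem_ball_zero_iff.mp hz)
  have hw : ‖ω z‖ < expBeanRadius := hschwarz.trans_lt (hzre.trans_eq hre)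
  obtain ⟨u, hu, hbean⟩ := exists_bean_eq_exp (exp_two_mul_sub_two_lt_of_lt_expBeanRadius hw)
  exact ⟨u, hu, by rw [hp z hz, hbean]⟩

/-- 𝒮*_𝔅-radius for the class 𝒮*_e. -/
theorem beanRadiusExp (re : ℝ)
    (hre : re = 1 + Real.log (Real.sqrt (2 / (1 + Real.exp 1 ^ 2))))
    (p : ℂ → ℂ) (hp : AnalyticOnNhd ℂ p unitDisk)
    (hsub : Subord p Complex.exp) :
    ∀ z ∈ unitDisk, ‖z‖ < re → ∃ u ∈ unitDisk, p z = Bean u :=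
  beanRadiusExp_general re hre p hsub
end
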